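/- arXiv:2303.06745 — 9 statements merged into one kernel-verified Lean document; each statement's English description precedes it below -/
import Mathlib

section
/- Let F be a field and f ∈ S_{n,d}(F) with ess(f) = r. If ℓ_1,…,ℓ_r ∈ S_{n,1}(F) and h_1,…,h_r ∈ S_{n,1}(F) are linear forms such that f ∈ F[ℓ_1,…,ℓ_r] and f ∈ F[h_1,…,h_r], then the F-linear spans satisfy span_F(ℓ_1,…,ℓ_r) = span_F(h_1,…,h_r). -/
open MvPolynomial

namespace EssUnique

variable {F : Type*} [Field F] {n : ℕ}

lemma exists_single_of_weight_one {σ : Type*} (u : σ →₀ ℕ)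
    (h : (Finsupp.weight (1 : σ → ℕ)) u = 1) : ∃ j, u = Finsupp.single j 1 := by
  have hdeg : u.degree = 1 := by rw [Finsupp.degree_eq_weight_one]; exact h
  have hcard : u.support.card = 1 := by
    have hle : u.support.card ≤ u.degree := by
      rw [Finsupp.degree]
      calc u.support.card = ∑ _i ∈ u.support, 1 := by simp
        _ ≤ ∑ i ∈ u.support, u i :=
          Finset.sum_le_sum fun i hi => Nat.one_le_iff_ne_zero.2 (Finsupp.mem_support_iff.1 hi)
    have hne : u.support.card ≠ 0 := by
      intro h0
      rw [Finset.card_eq_zero, Finsupp.support_eq_empty] at h0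
      subst h0
      simp [Finsupp.degree] at hdeg
    omega
  obtain ⟨j, b, hb, hub⟩ := Finsupp.card_support_eq_one'.mp hcard
  have hb1 : b = 1 := by
    rw [hub] at hdeg
    simpa [Finsupp.degree_single] using hdeg
  exact ⟨j, by rw [hub, hb1]⟩

lemma mem_span_X {σ : Type*} (p : MvPolynomial σ F) (hp : p.IsHomogeneous 1) :
    p ∈ Submodule.span F (Set.range (X : σ → MvPolynomial σ F)) := by
  rw [p.as_sum]
  apply Submodule.sum_mem
  intro u hu
  obtain ⟨j, rfl⟩ := exists_single_of_weight_one u (hp (mem_support_iff.mp hu))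
  rw [← C_mul_X_eq_monomial, ← smul_eq_C_mul]
  exact Submodule.smul_mem _ _ (Submodule.subset_span ⟨j, rfl⟩)

lemma aeval_eq_linear {σ τ : Type*} (μ : MvPolynomial σ F →ₗ[F] MvPolynomial τ F)
    (p : MvPolynomial σ F) (hp : p.IsHomogeneous 1) :
    aeval (fun j => μ (X j)) p = μ p := by
  have hmem := mem_span_X p hp
  clear hp
  induction hmem using Submodule.span_induction with
  | mem x hx => obtain ⟨j, rfl⟩ := hx; simp
  | zero => simp
  | add x y _ _ hx hy => rw [map_add, map_add, hx, hy]
  | smul a x _ hx => rw [map_smul, map_smul, hx]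

lemma aeval_injective_of_linearIndependent {ι : Type*}
    (e : ι → MvPolynomial (Fin n) F) (he1 : ∀ i, (e i).IsHomogeneous 1)
    (hind : LinearIndependent F e) :
    Function.Injective (aeval e : MvPolynomial ι F →ₐ[F] MvPolynomial (Fin n) F) := by
  obtain ⟨Q, hQ⟩ := (Submodule.span F (Set.range e)).exists_isCompl
  let proj := Submodule.linearProjOfIsCompl _ Q hQ
  let tot : (ι →₀ F) →ₗ[F] MvPolynomial ι F := Finsupp.linearCombination F X
  let μ : MvPolynomial (Fin n) F →ₗ[F] MvPolynomial ι F :=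
    tot ∘ₗ (hind.repr : Submodule.span F (Set.range e) →ₗ[F] (ι →₀ F)) ∘ₗ proj
  have hμ : ∀ i, μ (e i) = X i := by
    intro i
    have h1 : proj (e i) = ⟨e i, Submodule.subset_span ⟨i, rfl⟩⟩ :=
      Submodule.linearProjOfIsCompl_apply_left hQ ⟨e i, Submodule.subset_span ⟨i, rfl⟩⟩
    have h2 : hind.repr ⟨e i, Submodule.subset_span ⟨i, rfl⟩⟩ = Finsupp.single i 1 :=
      hind.repr_eq_single i _ rfl
    simp only [μ, LinearMap.comp_apply, h1, h2, tot]
    simp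
  set t : Fin n → MvPolynomial ι F := fun j => μ (X j) with ht
  have hti : ∀ i, aeval t (e i) = X i := by
    intro i
    rw [ht, aeval_eq_linear μ (e i) (he1 i)]
    exact hμ i
  have hcomp : ∀ x : MvPolynomial ι F, aeval t (aeval e x) = x := by
    intro x
    have hc : (aeval t).comp (aeval e) = aeval (X : ι → MvPolynomial ι F) := by
      rw [comp_aeval]
      congr 1
      funext i
      exact hti i
    calc aeval t (aeval e x) = ((aeval t).comp (aeval e)) x := rfl
      _ = aeval X x := by rw [hc]
      _ = x := aeval_X_left_apply x
  intro p q hpq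
  have := congrArg (aeval t) hpq
  rwa [hcomp, hcomp] at this

lemma exists_homog {ι : Type*} {d : ℕ} (b : ι → MvPolynomial (Fin n) F)
    (hb : ∀ i, (b i).IsHomogeneous 1) (f : MvPolynomial (Fin n) F) (hf : f.IsHomogeneous d)
    (g : MvPolynomial ι F) (hg : f = aeval b g) :
    ∃ g' : MvPolynomial ι F, g'.IsHomogeneous d ∧ f = aeval b g' := by
  refine ⟨homogeneousComponent d g, homogeneousComponent_isHomogeneous d g, ?_⟩
  have hsum : f = ∑ k ∈ Finset.range (g.totalDegree + 1), aeval b (homogeneousComponent k g) := by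
    rw [hg, ← map_sum]
    congr 1
    exact (sum_homogeneousComponent g).symm
  have hcomp : ∀ k, aeval b (homogeneousComponent k g) ∈ homogeneousSubmodule (Fin n) F k := by
    intro k
    rw [mem_homogeneousSubmodule]
    have := (homogeneousComponent_isHomogeneous k g).aeval b hb
    simpa using this
  have hfd : homogeneousComponent d f = f := by
    rw [homogeneousComponent_of_mem ((mem_homogeneousSubmodule _ _).2 hf), if_pos rfl]
  have key2 : f = if d ∈ Finset.range (g.totalDegree + 1)
      then aeval b (homogeneousComponent d g) else 0 := by
    conv_lhs => rw [← hfd, hsum]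
    rw [map_sum, Finset.sum_congr rfl fun k _ => homogeneousComponent_of_mem (hcomp k),
      Finset.sum_ite_eq]
  by_cases hd : d ∈ Finset.range (g.totalDegree + 1)
  · rw [key2, if_pos hd]
  · rw [key2, if_neg hd, homogeneousComponent_eq_zero, map_zero]
    rw [Finset.mem_range] at hd
    omega

end EssUnique

/-- The essential rank of a polynomial `f ∈ S_{n,d}(F)`: the least number `r` of linear
forms `ℓ₁, …, ℓ_r` such that `f = g(ℓ₁, …, ℓ_r)` for some `g ∈ F[y₁, …, y_r]_d`. -/
noncomputable def essRank (F : Type*) [Field F] (n d : ℕ) (f : MvPolynomial (Fin n) F) : ℕ :=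
  sInf { r : ℕ | ∃ ℓ : Fin r → MvPolynomial (Fin n) F,
    (∀ i, (ℓ i).IsHomogeneous 1) ∧
    ∃ g : MvPolynomial (Fin r) F, g.IsHomogeneous d ∧ f = aeval ℓ g }

namespace EssUnique

lemma essRank_le {F : Type*} [Field F] {n : ℕ} {d : ℕ} {f : MvPolynomial (Fin n) F}
    (hf : f.IsHomogeneous d)
    {s : ℕ} (b : Fin s → MvPolynomial (Fin n) F) (hb : ∀ i, (b i).IsHomogeneous 1)
    (g : MvPolynomial (Fin s) F) (hg : f = aeval b g) :
    essRank F n d f ≤ s := by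
  obtain ⟨g', hg', hfg⟩ := exists_homog b hb f hf g hg
  exact Nat.sInf_le ⟨b, hb, g', hg', hfg⟩

end EssUnique


/-- If `ess(f) = r` and `f ∈ F[ℓ₁,…,ℓ_r]` as well as `f ∈ F[h₁,…,h_r]` for linear forms
`ℓᵢ, hᵢ`, then `span(ℓ₁,…,ℓ_r) = span(h₁,…,h_r)`. -/
theorem uniqueness_of_essential_variables
    {F : Type*} [Field F] {n d r : ℕ}
    (f : MvPolynomial (Fin n) F) (hf : f.IsHomogeneous d)
    (hr : essRank F n d f = r)
    (ℓ h : Fin r → MvPolynomial (Fin n) F)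
    (hℓ : ∀ i, (ℓ i).IsHomogeneous 1) (hh : ∀ i, (h i).IsHomogeneous 1)
    (hfℓ : ∃ g : MvPolynomial (Fin r) F, f = aeval ℓ g)
    (hfh : ∃ g : MvPolynomial (Fin r) F, f = aeval h g) :
    Submodule.span F (Set.range ℓ) = Submodule.span F (Set.range h) := by
  classical
  obtain ⟨g₁, hg₁⟩ := hfℓ
  obtain ⟨g₂, hg₂⟩ := hfh
  set U := Submodule.span F (Set.range ℓ) with hUdef
  set V := Submodule.span F (Set.range h) with hVdef
  set W := U ⊓ V with hWdef
  haveI hUfin : FiniteDimensional F U := FiniteDimensional.span_of_finite F (Set.finite_range ℓ)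
  haveI hVfin : FiniteDimensional F V := FiniteDimensional.span_of_finite F (Set.finite_range h)
  haveI hWfin : FiniteDimensional F W := Submodule.finiteDimensional_of_le inf_le_left
  have hUhom : ∀ x : MvPolynomial (Fin n) F, x ∈ U → x.IsHomogeneous 1 := by
    intro x hx
    have hle : U ≤ homogeneousSubmodule (Fin n) F 1 :=
      Submodule.span_le.2 (by rintro y ⟨i, rfl⟩; exact hℓ i)
    exact (mem_homogeneousSubmodule _ _).1 (hle hx)
  have hVhom : ∀ x : MvPolynomial (Fin n) F, x ∈ V → x.IsHomogeneous 1 := by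
    intro x hx
    have hle : V ≤ homogeneousSubmodule (Fin n) F 1 :=
      Submodule.span_le.2 (by rintro y ⟨i, rfl⟩; exact hh i)
    exact (mem_homogeneousSubmodule _ _).1 (hle hx)
  -- complement of W inside U
  obtain ⟨Cu, hCu⟩ := (W.comap U.subtype).exists_isCompl
  set W' := Cu.map U.subtype with hW'def
  have hmapWU : (W.comap U.subtype).map U.subtype = W := by
    rw [Submodule.map_comap_subtype, inf_eq_right.2 (inf_le_left : W ≤ U)]
  have hsupU : W ⊔ W' = U := by
    rw [hW'def, ← hmapWU, ← Submodule.map_sup, hCu.sup_eq_top, Submodule.map_top,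
      Submodule.range_subtype]
  have hdisjU : Disjoint W W' := by
    rw [disjoint_iff, hW'def, ← hmapWU,
      ← Submodule.map_inf _ (Submodule.injective_subtype U), hCu.inf_eq_bot, Submodule.map_bot]
  have hW'leU : W' ≤ U := Submodule.map_subtype_le U Cu
  -- complement of W inside V
  obtain ⟨Cv, hCv⟩ := (W.comap V.subtype).exists_isCompl
  set W'' := Cv.map V.subtype with hW''def
  have hmapWV : (W.comap V.subtype).map V.subtype = W := by
    rw [Submodule.map_comap_subtype, inf_eq_right.2 (inf_le_right : W ≤ V)]
  have hsupV : W ⊔ W'' = V := by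
    rw [hW''def, ← hmapWV, ← Submodule.map_sup, hCv.sup_eq_top, Submodule.map_top,
      Submodule.range_subtype]
  have hdisjV : Disjoint W W'' := by
    rw [disjoint_iff, hW''def, ← hmapWV,
      ← Submodule.map_inf _ (Submodule.injective_subtype V), hCv.inf_eq_bot, Submodule.map_bot]
  have hW''leV : W'' ≤ V := Submodule.map_subtype_le V Cv
  haveI : FiniteDimensional F W' := Submodule.finiteDimensional_of_le hW'leU
  haveI : FiniteDimensional F W'' := Submodule.finiteDimensional_of_le hW''leV
  -- bases
  set s := Module.finrank F W with hsdef
  set k := Module.finrank F W' with hkdef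
  set k2 := Module.finrank F W'' with hk2def
  let bW := Module.finBasis F W
  let bW' := Module.finBasis F W'
  let bW'' := Module.finBasis F W''
  set w : Fin s → MvPolynomial (Fin n) F := W.subtype ∘ bW with hwdef
  set u' : Fin k → MvPolynomial (Fin n) F := W'.subtype ∘ bW' with hu'def
  set v' : Fin k2 → MvPolynomial (Fin n) F := W''.subtype ∘ bW'' with hv'def
  have hw : LinearIndependent F w := bW.linearIndependent.map' W.subtype (Submodule.ker_subtype W)
  have hu' : LinearIndependent F u' :=
    bW'.linearIndependent.map' W'.subtype (Submodule.ker_subtype W')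
  have hv' : LinearIndependent F v' :=
    bW''.linearIndependent.map' W''.subtype (Submodule.ker_subtype W'')
  have hspanw : Submodule.span F (Set.range w) = W := by
    rw [hwdef, Set.range_comp, Submodule.span_image, bW.span_eq, Submodule.map_top,
      Submodule.range_subtype]
  have hspanu' : Submodule.span F (Set.range u') = W' := by
    rw [hu'def, Set.range_comp, Submodule.span_image, bW'.span_eq, Submodule.map_top,
      Submodule.range_subtype]
  have hspanv' : Submodule.span F (Set.range v') = W'' := by
    rw [hv'def, Set.range_comp, Submodule.span_image, bW''.span_eq, Submodule.map_top,
      Submodule.range_subtype]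
  set e : (Fin s ⊕ Fin k) ⊕ Fin k2 → MvPolynomial (Fin n) F := Sum.elim (Sum.elim w u') v'
    with hedef
  have hind_wu : LinearIndependent F (Sum.elim w u') :=
    hw.sum_type hu' (by rw [hspanw, hspanu']; exact hdisjU)
  have hspan_wu : Submodule.span F (Set.range (Sum.elim w u')) = U := by
    rw [Set.Sum.elim_range, Submodule.span_union, hspanw, hspanu', hsupU]
  have hdisj2 : Disjoint U W'' := by
    have h1 : U ⊓ W'' ≤ W ⊓ W'' := by
      intro x hx
      rw [Submodule.mem_inf] at hx ⊢
      exact ⟨Submodule.mem_inf.2 ⟨hx.1, hW''leV hx.2⟩, hx.2⟩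
    exact disjoint_iff.2 (le_bot_iff.1 (h1.trans (disjoint_iff.1 hdisjV).le))
  have hind_e : LinearIndependent F e :=
    hind_wu.sum_type hv' (by rw [hspan_wu, hspanv']; exact hdisj2)
  have he1 : ∀ i, (e i).IsHomogeneous 1 := by
    rintro ((i | i) | i)
    · exact hUhom _ ((inf_le_left : W ≤ U) (bW i).2)
    · exact hUhom _ (hW'leU (bW' i).2)
    · exact hVhom _ (hW''leV (bW'' i).2)
  have hinj := EssUnique.aeval_injective_of_linearIndependent e he1 hind_e
  -- express f through e with variables in the U-block
  have hbe : (fun j => e (Sum.inl j)) = Sum.elim w u' := funext fun j => by cases j <;> rfl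
  have hmemU : ∀ i, ℓ i ∈ Submodule.span F (Set.range fun j => e (Sum.inl j)) := by
    intro i
    rw [hbe, hspan_wu]
    exact Submodule.subset_span ⟨i, rfl⟩
  choose c hc using fun i => (Submodule.mem_span_range_iff_exists_fun F).1 (hmemU i)
  set L : Fin r → MvPolynomial ((Fin s ⊕ Fin k) ⊕ Fin k2) F :=
    fun i => ∑ j, c i j • X (Sum.inl j) with hLdef
  have hLe : ∀ i, aeval e (L i) = ℓ i := by
    intro i
    rw [hLdef]
    simp only [map_sum, map_smul, aeval_X]
    exact hc i
  have hΦp₁ : aeval e (aeval L g₁) = f := by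
    have hcm : (aeval e).comp (aeval L) = aeval ℓ := by
      rw [comp_aeval]
      congr 1
      funext i
      exact hLe i
    calc aeval e (aeval L g₁) = ((aeval e).comp (aeval L)) g₁ := rfl
      _ = aeval ℓ g₁ := by rw [hcm]
      _ = f := hg₁.symm
  have hsupp₁ : aeval L g₁ ∈
      supported F (Set.range (Sum.inl : (Fin s ⊕ Fin k) → (Fin s ⊕ Fin k) ⊕ Fin k2)) := by
    have hrange : aeval L g₁ ∈ Algebra.adjoin F (Set.range L) := by
      rw [Algebra.adjoin_range_eq_range_aeval]
      exact ⟨g₁, rfl⟩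
    refine Algebra.adjoin_le ?_ hrange
    rintro x ⟨i, rfl⟩
    rw [hLdef]
    refine Subalgebra.sum_mem _ fun j _ => Subalgebra.smul_mem _ ?_ _
    exact X_mem_supported.2 ⟨j, rfl⟩
  -- express f through e with variables in the V-block
  set emb2 : (Fin s ⊕ Fin k2) → (Fin s ⊕ Fin k) ⊕ Fin k2 :=
    Sum.elim (Sum.inl ∘ Sum.inl) Sum.inr with hemb2def
  have hbe2 : (fun j => e (emb2 j)) = Sum.elim w v' := funext fun j => by cases j <;> rfl
  have hspan_wv : Submodule.span F (Set.range (Sum.elim w v')) = V := by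
    rw [Set.Sum.elim_range, Submodule.span_union, hspanw, hspanv', hsupV]
  have hmemV : ∀ i, h i ∈ Submodule.span F (Set.range fun j => e (emb2 j)) := by
    intro i
    rw [hbe2, hspan_wv]
    exact Submodule.subset_span ⟨i, rfl⟩
  choose c2 hc2 using fun i => (Submodule.mem_span_range_iff_exists_fun F).1 (hmemV i)
  set L2 : Fin r → MvPolynomial ((Fin s ⊕ Fin k) ⊕ Fin k2) F :=
    fun i => ∑ j, c2 i j • X (emb2 j) with hL2def
  have hLe2 : ∀ i, aeval e (L2 i) = h i := by
    intro i
    rw [hL2def]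
    simp only [map_sum, map_smul, aeval_X]
    exact hc2 i
  have hΦp₂ : aeval e (aeval L2 g₂) = f := by
    have hcm : (aeval e).comp (aeval L2) = aeval h := by
      rw [comp_aeval]
      congr 1
      funext i
      exact hLe2 i
    calc aeval e (aeval L2 g₂) = ((aeval e).comp (aeval L2)) g₂ := rfl
      _ = aeval h g₂ := by rw [hcm]
      _ = f := hg₂.symm
  have hsupp₂ : aeval L2 g₂ ∈ supported F (Set.range emb2) := by
    have hrange : aeval L2 g₂ ∈ Algebra.adjoin F (Set.range L2) := by
      rw [Algebra.adjoin_range_eq_range_aeval]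
      exact ⟨g₂, rfl⟩
    refine Algebra.adjoin_le ?_ hrange
    rintro x ⟨i, rfl⟩
    rw [hL2def]
    refine Subalgebra.sum_mem _ fun j _ => Subalgebra.smul_mem _ ?_ _
    exact X_mem_supported.2 ⟨j, rfl⟩
  -- the two expressions coincide
  have hp12 : aeval L g₁ = aeval L2 g₂ := hinj (hΦp₁.trans hΦp₂.symm)
  -- variables lie in the W-block
  have hsub : ↑(aeval L g₁).vars ⊆
      Set.range (Sum.inl ∘ Sum.inl : Fin s → (Fin s ⊕ Fin k) ⊕ Fin k2) := by
    have h1 := (mem_supported).1 hsupp₁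
    have h2 := (mem_supported).1 (hp12 ▸ hsupp₂)
    intro x hx
    obtain ⟨y, hy⟩ := h1 hx
    obtain ⟨z, hz⟩ := h2 hx
    cases z with
    | inl a => exact ⟨a, hz⟩
    | inr a =>
      exfalso
      rw [← hy] at hz
      simp [hemb2def] at hz
  obtain ⟨q, hq⟩ := exists_rename_eq_of_vars_subset_range (aeval L g₁)
    (Sum.inl ∘ Sum.inl : Fin s → (Fin s ⊕ Fin k) ⊕ Fin k2)
    (Sum.inl_injective.comp Sum.inl_injective) hsub
  have hfw : f = aeval w q := by
    rw [← hΦp₁, ← hq, aeval_rename]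
    rfl
  have hw1 : ∀ i, (w i).IsHomogeneous 1 := fun i => hUhom _ ((inf_le_left : W ≤ U) (bW i).2)
  have hrs : r ≤ s := by
    rw [← hr]
    exact EssUnique.essRank_le hf w hw1 q hfw
  have hUr : Module.finrank F U ≤ r := by
    have := finrank_range_le_card (R := F) ℓ
    simpa [Set.finrank] using this
  have hVr : Module.finrank F V ≤ r := by
    have := finrank_range_le_card (R := F) h
    simpa [Set.finrank] using this
  have hWU : W = U :=
    Submodule.eq_of_le_of_finrank_le inf_le_left (le_trans hUr hrs)
  have hWV : W = V :=
    Submodule.eq_of_le_of_finrank_le inf_le_right (le_trans hVr hrs)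
  exact hWU.symm.trans hWV
end

section
/- Let F be a field and f ∈ S_{n,d}(F) with ess(f) = r, and let ℓ_1,…,ℓ_r ∈ S_{n,1}(F) be linear forms with f ∈ F[ℓ_1,…,ℓ_r]. If h_1,…,h_s ∈ S_{n,1}(F) are any linear forms with f ∈ F[h_1,…,h_s], then span_F(ℓ_1,…,ℓ_r) ⊆ span_F(h_1,…,h_s). -/
open MvPolynomial

section Aux

variable {F : Type*} [Field F] {n : ℕ}

/-- The linear form with coefficient vector `v`. -/
noncomputable def linForm (F : Type*) [Field F] (n : ℕ) :
    (Fin n → F) →ₗ[F] MvPolynomial (Fin n) F :=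
  Fintype.linearCombination F fun j => X j

lemma linForm_apply (v : Fin n → F) : linForm F n v = ∑ j, v j • X j :=
  Fintype.linearCombination_apply F _ v

lemma linForm_isHomogeneous (v : Fin n → F) : (linForm F n v).IsHomogeneous 1 := by
  rw [← mem_homogeneousSubmodule, linForm_apply]
  exact Submodule.sum_mem _ fun j _ =>
    Submodule.smul_mem _ _ ((mem_homogeneousSubmodule _ _).2 (isHomogeneous_X F j))

lemma exists_linForm_eq {p : MvPolynomial (Fin n) F} (hp : p.IsHomogeneous 1) :
    ∃ v, linForm F n v = p := by
  classical
  have hmem : p ∈ LinearMap.range (linForm F n) := by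
    rw [linForm, Fintype.range_linearCombination]
    have h1 : ∀ m ∈ p.support,
        (monomial m) (coeff m p) ∈
          Submodule.span F (Set.range fun j : Fin n => (X j : MvPolynomial (Fin n) F)) := by
      intro m hm
      have hd : Finsupp.degree m = 1 := by
        rw [Finsupp.degree_eq_weight_one]
        exact hp (mem_support_iff.mp hm)
      obtain ⟨j, hj⟩ : ∃ j, m = Finsupp.single j 1 := by
        have hc : Multiset.card (Finsupp.toMultiset m) = 1 := by
          rw [Finsupp.card_toMultiset]
          simpa [Finsupp.degree_apply, Finsupp.sum] using hd
        obtain ⟨a, ha⟩ := Multiset.card_eq_one.mp hc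
        refine ⟨a, ?_⟩
        have h2 := Finsupp.toMultiset_toFinsupp m
        rw [ha, Multiset.toFinsupp_singleton] at h2
        exact h2.symm
      subst hj
      have hX : (X j : MvPolynomial (Fin n) F) = monomial (Finsupp.single j 1) 1 := by
        rw [← X_pow_eq_monomial, pow_one]
      have hXj : (monomial (Finsupp.single j 1)) (coeff (Finsupp.single j 1) p)
          = coeff (Finsupp.single j 1) p • X j := by
        rw [smul_eq_C_mul, hX, C_mul_monomial, mul_one]
      rw [hXj]
      exact Submodule.smul_mem _ _ (Submodule.subset_span ⟨j, rfl⟩)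
    have h2 : (∑ m ∈ p.support, (monomial m) (coeff m p)) ∈
        Submodule.span F (Set.range fun j : Fin n => (X j : MvPolynomial (Fin n) F)) :=
      Submodule.sum_mem _ h1
    rwa [← as_sum p] at h2
  exact hmem

/-- The algebra endomorphism of the polynomial ring induced by the linear map `P`. -/
noncomputable def subst (P : (Fin n → F) →ₗ[F] (Fin n → F)) :
    MvPolynomial (Fin n) F →ₐ[F] MvPolynomial (Fin n) F :=
  aeval fun j => linForm F n (P (Pi.single j 1))

lemma subst_X (P : (Fin n → F) →ₗ[F] (Fin n → F)) (j : Fin n) :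
    subst P (X j) = linForm F n (P (Pi.single j 1)) :=
  aeval_X _ j

lemma sum_smul_single (v : Fin n → F) :
    ∑ j, v j • (Pi.single j 1 : Fin n → F) = v := by
  classical
  have h1 : ∀ j, v j • (Pi.single j 1 : Fin n → F) = Pi.single j (v j) := fun j => by
    rw [← Pi.single_smul, smul_eq_mul, mul_one]
  rw [Finset.sum_congr rfl fun j _ => h1 j]
  exact Finset.univ_sum_single v

lemma subst_linForm (P : (Fin n → F) →ₗ[F] (Fin n → F)) (v : Fin n → F) :
    subst P (linForm F n v) = linForm F n (P v) := by
  conv_rhs => rw [← sum_smul_single v]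
  rw [linForm_apply, map_sum, map_sum, map_sum]
  refine Finset.sum_congr rfl fun j _ => ?_
  rw [map_smul, map_smul, map_smul, subst_X]

lemma subst_subst (P Q : (Fin n → F) →ₗ[F] (Fin n → F)) (p : MvPolynomial (Fin n) F) :
    subst P (subst Q p) = subst (P ∘ₗ Q) p := by
  have h : (subst P).comp (subst Q) = subst (P ∘ₗ Q) := by
    apply MvPolynomial.algHom_ext
    intro j
    rw [AlgHom.comp_apply, subst_X, subst_X, subst_linForm, LinearMap.comp_apply]
  exact DFunLike.congr_fun h p

lemma subst_fixes {P : (Fin n → F) →ₗ[F] (Fin n → F)} {M : Set (Fin n → F)}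
    (hP : ∀ x ∈ M, P x = x) {p : MvPolynomial (Fin n) F}
    (hp : p ∈ Algebra.adjoin F (linForm F n '' M)) : subst P p = p := by
  have hle : Algebra.adjoin F (linForm F n '' M) ≤
      AlgHom.equalizer (subst P) (AlgHom.id F (MvPolynomial (Fin n) F)) := by
    rw [Algebra.adjoin_le_iff]
    rintro q hq
    obtain ⟨x, hx, rfl⟩ := hq
    simp only [SetLike.mem_coe, AlgHom.mem_equalizer, AlgHom.id_apply]
    rw [subst_linForm, hP x hx]
  exact hle hp

lemma adjoin_image_span_le (s : Set (Fin n → F)) :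
    Algebra.adjoin F (linForm F n '' (Submodule.span F s : Set (Fin n → F))) ≤
      Algebra.adjoin F (linForm F n '' s) := by
  rw [Algebra.adjoin_le_iff]
  rintro q hq
  obtain ⟨x, hx, rfl⟩ := hq
  have h1 : linForm F n x ∈ Submodule.span F (linForm F n '' s) := by
    rw [← Submodule.map_span]
    exact ⟨x, hx, rfl⟩
  have h2 : Submodule.span F (linForm F n '' s) ≤
      Subalgebra.toSubmodule (Algebra.adjoin F (linForm F n '' s)) :=
    Submodule.span_le.2 fun y hy => Algebra.subset_adjoin hy
  exact h2 h1

end Aux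

section Proj

variable {F : Type*} [Field F] {n : ℕ}

/-- Coordinate projection onto the coordinates of a basis set lying in `A`. -/
noncomputable def projOf (S : Set (Fin n → F)) (b : Module.Basis S F (Fin n → F))
    (A : Set (Fin n → F)) [DecidablePred (· ∈ A)] : (Fin n → F) →ₗ[F] (Fin n → F) :=
  (Finsupp.lsum F fun e : S =>
      if (e : Fin n → F) ∈ A then LinearMap.toSpanSingleton F (Fin n → F) (e : Fin n → F)
      else 0) ∘ₗ b.repr.toLinearMap

lemma projOf_apply (S : Set (Fin n → F)) (b : Module.Basis S F (Fin n → F))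
    (A : Set (Fin n → F)) [DecidablePred (· ∈ A)] (x : Fin n → F) :
    projOf S b A x = (b.repr x).sum fun e c =>
      (if (e : Fin n → F) ∈ A then LinearMap.toSpanSingleton F (Fin n → F) (e : Fin n → F)
        else 0) c := by
  rw [projOf, LinearMap.comp_apply, LinearEquiv.coe_toLinearMap, Finsupp.lsum_apply]

lemma projOf_basis (S : Set (Fin n → F)) (b : Module.Basis S F (Fin n → F))
    (hb : ∀ e : S, b e = (e : Fin n → F))
    (A : Set (Fin n → F)) [DecidablePred (· ∈ A)] (e : S) :
    projOf S b A (e : Fin n → F) = if (e : Fin n → F) ∈ A then (e : Fin n → F) else 0 := by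
  have hrepr : b.repr ((e : Fin n → F)) = Finsupp.single e 1 := by
    rw [← hb e, Module.Basis.repr_self]
  rw [projOf, LinearMap.comp_apply, LinearEquiv.coe_toLinearMap, hrepr, Finsupp.lsum_single]
  by_cases hA : (e : Fin n → F) ∈ A
  · rw [if_pos hA, if_pos hA, LinearMap.toSpanSingleton_apply, one_smul]
  · rw [if_neg hA, if_neg hA, LinearMap.zero_apply]

lemma projOf_mem_span (S : Set (Fin n → F)) (b : Module.Basis S F (Fin n → F))
    (A : Set (Fin n → F)) [DecidablePred (· ∈ A)] (x : Fin n → F) :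
    projOf S b A x ∈ Submodule.span F A := by
  rw [projOf_apply]
  refine Submodule.finsuppSum_mem (S := Submodule.span F A) (f := b.repr x) (h := fun e he => ?_)
  by_cases hA : (e : Fin n → F) ∈ A
  · rw [if_pos hA, LinearMap.toSpanSingleton_apply]
    exact Submodule.smul_mem _ _ (Submodule.subset_span hA)
  · rw [if_neg hA, LinearMap.zero_apply]
    exact Submodule.zero_mem _

lemma projOf_fixes (S : Set (Fin n → F)) (b : Module.Basis S F (Fin n → F))
    (hb : ∀ e : S, b e = (e : Fin n → F))
    (A : Set (Fin n → F)) [DecidablePred (· ∈ A)] (hAS : A ⊆ S) :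
    ∀ x ∈ Submodule.span F A, projOf S b A x = x := by
  intro x hx
  have heq : Set.EqOn (projOf S b A) (LinearMap.id (R := F) (M := Fin n → F)) A := by
    intro a ha
    have h1 := projOf_basis S b hb A ⟨a, hAS ha⟩
    simpa [ha] using h1
  exact LinearMap.eqOn_span heq hx

lemma projOf_span_inter (S : Set (Fin n → F)) (b : Module.Basis S F (Fin n → F))
    (hb : ∀ e : S, b e = (e : Fin n → F))
    (A : Set (Fin n → F)) [DecidablePred (· ∈ A)] (B : Set (Fin n → F)) (hBS : B ⊆ S) :
    ∀ x ∈ Submodule.span F B, projOf S b A x ∈ Submodule.span F (A ∩ B) := by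
  intro x hx
  induction hx using Submodule.span_induction with
  | mem y hy =>
      have h1 := projOf_basis S b hb A ⟨y, hBS hy⟩
      simp only at h1
      rw [h1]
      by_cases hA : y ∈ A
      · rw [if_pos hA]
        exact Submodule.subset_span ⟨hA, hy⟩
      · rw [if_neg hA]
        exact Submodule.zero_mem _
  | zero => rw [map_zero]; exact Submodule.zero_mem _
  | add y z _ _ hy hz => rw [map_add]; exact Submodule.add_mem _ hy hz
  | smul c y _ hy => rw [map_smul]; exact Submodule.smul_mem _ _ hy

end Proj

/-- If `ess(f) = r`, `f ∈ F[ℓ₁,…,ℓ_r]` for linear forms `ℓᵢ`, and `f ∈ F[h₁,…,h_s]` for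
linear forms `hᵢ`, then `span(ℓ₁,…,ℓ_r) ⊆ span(h₁,…,h_s)`. -/
theorem essential_variables_subset_span
    {F : Type*} [Field F] {n d r s : ℕ}
    (f : MvPolynomial (Fin n) F) (hf : f.IsHomogeneous d)
    (hr : essRank F n d f = r)
    (ℓ : Fin r → MvPolynomial (Fin n) F) (h : Fin s → MvPolynomial (Fin n) F)
    (hℓ : ∀ i, (ℓ i).IsHomogeneous 1) (hh : ∀ i, (h i).IsHomogeneous 1)
    (hfℓ : ∃ g : MvPolynomial (Fin r) F, f = aeval ℓ g)
    (hfh : ∃ g : MvPolynomial (Fin s) F, f = aeval h g) :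
    Submodule.span F (Set.range ℓ) ≤ Submodule.span F (Set.range h) := by
  classical
  by_contra hVW
  obtain ⟨g₁, hg₁⟩ := hfℓ
  obtain ⟨g₂, hg₂⟩ := hfh
  choose u hu using fun i => exists_linForm_eq (hℓ i)
  choose w hw using fun i => exists_linForm_eq (hh i)
  set V : Submodule F (Fin n → F) := Submodule.span F (Set.range u) with hVdef
  set W : Submodule F (Fin n → F) := Submodule.span F (Set.range w) with hWdef
  have hrangeℓ : Set.range ℓ = linForm F n '' Set.range u := by
    rw [show ℓ = (linForm F n) ∘ u from funext fun i => (hu i).symm, Set.range_comp]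
  have hrangeh : Set.range h = linForm F n '' Set.range w := by
    rw [show h = (linForm F n) ∘ w from funext fun i => (hw i).symm, Set.range_comp]
  have hVW' : ¬ V ≤ W := by
    intro hle
    apply hVW
    rw [hrangeℓ, hrangeh, ← Submodule.map_span, ← Submodule.map_span]
    exact Submodule.map_mono hle
  set U : Submodule F (Fin n → F) := V ⊓ W with hUdef
  obtain ⟨s₀, hs₀U, hs₀span, hs₀li⟩ := exists_linearIndependent F (U : Set (Fin n → F))
  have hspanU : Submodule.span F s₀ = U := by rw [hs₀span, Submodule.span_eq]
  have hs₀V : s₀ ⊆ (V : Set (Fin n → F)) := fun x hx => (Submodule.mem_inf.mp (hs₀U hx)).1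
  have hs₀W : s₀ ⊆ (W : Set (Fin n → F)) := fun x hx => (Submodule.mem_inf.mp (hs₀U hx)).2
  -- extend s₀ to a basis set of V and a basis set of W
  set sV := LinearIndepOn.extend (v := id) hs₀li hs₀V with hsVdef
  have hsVli : LinearIndependent F (Subtype.val : sV → (Fin n → F)) :=
    LinearIndepOn.linearIndepOn_extend (v := id) hs₀li hs₀V
  have hsVsub : sV ⊆ (V : Set (Fin n → F)) := LinearIndepOn.extend_subset (v := id) hs₀li hs₀V
  have hs₀sV : s₀ ⊆ sV := LinearIndepOn.subset_extend (v := id) hs₀li hs₀V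
  have hsVspan : Submodule.span F sV = V := by
    refine le_antisymm (Submodule.span_le.2 hsVsub) ?_
    conv_lhs => rw [← Submodule.span_eq V]
    exact Submodule.span_le.2 (LinearIndepOn.subset_span_extend hs₀li hs₀V)
  set sW := LinearIndepOn.extend (v := id) hs₀li hs₀W with hsWdef
  have hsWli : LinearIndependent F (Subtype.val : sW → (Fin n → F)) :=
    LinearIndepOn.linearIndepOn_extend (v := id) hs₀li hs₀W
  have hsWsub : sW ⊆ (W : Set (Fin n → F)) := LinearIndepOn.extend_subset (v := id) hs₀li hs₀W
  have hs₀sW : s₀ ⊆ sW := LinearIndepOn.subset_extend (v := id) hs₀li hs₀W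
  have hsWspan : Submodule.span F sW = W := by
    refine le_antisymm (Submodule.span_le.2 hsWsub) ?_
    conv_lhs => rw [← Submodule.span_eq W]
    exact Submodule.span_le.2 (LinearIndepOn.subset_span_extend hs₀li hs₀W)
  -- sV ∪ sW is linearly independent
  have hdisj2 : Disjoint (Submodule.span F s₀) (Submodule.span F (sW \ s₀)) := by
    have hpre : Disjoint (Subtype.val ⁻¹' s₀ : Set sW) (Subtype.val ⁻¹' (sW \ s₀)) :=
      (Set.disjoint_sdiff_right).preimage _
    have hd := hsWli.disjoint_span_image hpre
    rw [Subtype.image_preimage_coe, Subtype.image_preimage_coe,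
      Set.inter_eq_right.mpr hs₀sW, Set.inter_eq_right.mpr Set.diff_subset] at hd
    exact hd
  have hdisj : Disjoint (Submodule.span F sV) (Submodule.span F (sW \ s₀)) := by
    rw [Submodule.disjoint_def]
    intro x hxV hxW'
    have hx1 : x ∈ V := hsVspan ▸ hxV
    have hx2 : x ∈ W := Submodule.span_le.2 ((Set.diff_subset).trans hsWsub) hxW'
    have hxU : x ∈ Submodule.span F s₀ := by
      rw [hspanU]
      exact Submodule.mem_inf.mpr ⟨hx1, hx2⟩
    exact Submodule.disjoint_def.mp hdisj2 x hxU hxW'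
  have hunion : LinearIndependent F (Subtype.val : ↥(sV ∪ sW) → (Fin n → F)) := by
    have h2 := LinearIndepOn.union (v := id) hsVli (LinearIndepOn.mono (v := id) hsWli Set.diff_subset)
      (by simpa only [Set.image_id] using hdisj)
    have he : sV ∪ (sW \ s₀) = sV ∪ sW := by
      ext x
      simp only [Set.mem_union, Set.mem_diff]
      constructor
      · rintro (hx | ⟨hx, _⟩)
        · exact Or.inl hx
        · exact Or.inr hx
      · rintro (hx | hx)
        · exact Or.inl hx
        · by_cases hx0 : x ∈ s₀
          · exact Or.inl (hs₀sV hx0)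
          · exact Or.inr ⟨hx, hx0⟩
    rwa [he] at h2
  -- extend to a basis of the whole space
  set S := LinearIndepOn.extend (v := id) hunion (Set.subset_univ (sV ∪ sW)) with hSdef
  have hsubS : sV ∪ sW ⊆ S := LinearIndepOn.subset_extend (v := id) hunion _
  have hSli : LinearIndependent F (Subtype.val : S → (Fin n → F)) :=
    LinearIndepOn.linearIndepOn_extend (v := id) hunion _
  have hSfin : S.Finite := hSli.setFinite
  let b : Module.Basis S F (Fin n → F) := Module.Basis.extend hunion
  have hbe : ∀ e : S, b e = (e : Fin n → F) := fun e => Module.Basis.extend_apply_self hunion e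
  -- f is fixed by the substitutions attached to the two projections
  have hfV : f ∈ Algebra.adjoin F (linForm F n '' (V : Set (Fin n → F))) := by
    have h1 : f ∈ Algebra.adjoin F (Set.range ℓ) := by
      rw [Algebra.adjoin_range_eq_range_aeval]
      exact ⟨g₁, hg₁.symm⟩
    refine Algebra.adjoin_mono ?_ h1
    rw [hrangeℓ]
    exact Set.image_mono Submodule.subset_span
  have hfW : f ∈ Algebra.adjoin F (linForm F n '' (W : Set (Fin n → F))) := by
    have h1 : f ∈ Algebra.adjoin F (Set.range h) := by
      rw [Algebra.adjoin_range_eq_range_aeval]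
      exact ⟨g₂, hg₂.symm⟩
    refine Algebra.adjoin_mono ?_ h1
    rw [hrangeh]
    exact Set.image_mono Submodule.subset_span
  have hPVfix : ∀ x ∈ (V : Set (Fin n → F)), projOf S b sV x = x := by
    intro x hx
    exact projOf_fixes S b hbe sV ((Set.subset_union_left).trans hsubS) x
      (by rw [hsVspan]; exact hx)
  have hPWfix : ∀ x ∈ (W : Set (Fin n → F)), projOf S b sW x = x := by
    intro x hx
    exact projOf_fixes S b hbe sW ((Set.subset_union_right).trans hsubS) x
      (by rw [hsWspan]; exact hx)
  have hPV : subst (projOf S b sV) f = f := subst_fixes hPVfix hfV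
  have hPW : subst (projOf S b sW) f = f := subst_fixes hPWfix hfW
  have hcomp : f = subst (projOf S b sV ∘ₗ projOf S b sW) f := by
    rw [← subst_subst, hPW, hPV]
  -- hence f lies in the algebra generated by the linear forms of sV ∩ sW
  have hmem1 : f ∈ Algebra.adjoin F (linForm F n '' (sV ∩ sW)) := by
    have h1 : f ∈ (aeval fun j =>
        linForm F n ((projOf S b sV ∘ₗ projOf S b sW) (Pi.single j 1))).range := ⟨f, hcomp.symm⟩
    rw [← Algebra.adjoin_range_eq_range_aeval] at h1
    have h2 : Set.range (fun j => linForm F n ((projOf S b sV ∘ₗ projOf S b sW) (Pi.single j 1)))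
        ⊆ linForm F n '' (Submodule.span F (sV ∩ sW) : Set (Fin n → F)) := by
      rintro q ⟨j, rfl⟩
      refine ⟨_, ?_, rfl⟩
      rw [LinearMap.comp_apply]
      exact projOf_span_inter S b hbe sV sW ((Set.subset_union_right).trans hsubS) _
        (projOf_mem_span S b sW (Pi.single j 1))
    exact adjoin_image_span_le _ (Algebra.adjoin_mono h2 h1)
  -- enumerate sV ∩ sW
  have hIfin : (sV ∩ sW).Finite :=
    hSfin.subset ((Set.inter_subset_left).trans ((Set.subset_union_left).trans hsubS))
  haveI : Fintype ↥(sV ∩ sW) := hIfin.fintype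
  set t' := Fintype.card ↥(sV ∩ sW) with ht'def
  let e : Fin t' ≃ ↥(sV ∩ sW) := (Fintype.equivFin ↥(sV ∩ sW)).symm
  let fam : Fin t' → MvPolynomial (Fin n) F := fun i => linForm F n ((e i : Fin n → F))
  have hfamrange : linForm F n '' (sV ∩ sW) = Set.range fam := by
    have h1 : Set.range (fun i : Fin t' => ((e i : Fin n → F))) = sV ∩ sW := by
      rw [show (fun i : Fin t' => ((e i : Fin n → F))) = Subtype.val ∘ ⇑e from rfl,
        Set.range_comp, Equiv.range_eq_univ, Set.image_univ, Subtype.range_coe]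
    rw [show fam = (linForm F n) ∘ (fun i : Fin t' => ((e i : Fin n → F))) from rfl,
      Set.range_comp, h1]
  obtain ⟨g₀, hg₀⟩ : ∃ g₀, aeval fam g₀ = f := by
    have h1 := hmem1
    rw [hfamrange, Algebra.adjoin_range_eq_range_aeval] at h1
    exact h1
  -- replace g₀ by its degree-d homogeneous component
  have hfamh : ∀ i, (fam i).IsHomogeneous 1 := fun i => linForm_isHomogeneous _
  have hfd : f = aeval fam ((homogeneousComponent d) g₀) := by
    have key : ∀ k, (homogeneousComponent d) ((aeval fam) ((homogeneousComponent k) g₀))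
        = if d = k then (aeval fam) ((homogeneousComponent k) g₀) else 0 := by
      intro k
      have hk : ((aeval fam) ((homogeneousComponent k) g₀)).IsHomogeneous k := by
        have hkk := (homogeneousComponent_isHomogeneous k g₀).aeval fam hfamh
        simpa using hkk
      exact homogeneousComponent_of_mem ((mem_homogeneousSubmodule _ _).2 hk)
    have h1 : f = ∑ k ∈ Finset.range (g₀.totalDegree + 1),
        (aeval fam) ((homogeneousComponent k) g₀) := by
      rw [← map_sum, sum_homogeneousComponent, hg₀]
    have h2 := congrArg (homogeneousComponent d) h1
    rw [homogeneousComponent_of_mem ((mem_homogeneousSubmodule d f).2 hf), if_pos rfl,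
      map_sum] at h2
    simp only [key] at h2
    rw [Finset.sum_ite_eq] at h2
    by_cases hd : d ∈ Finset.range (g₀.totalDegree + 1)
    · rw [if_pos hd] at h2
      exact h2
    · rw [if_neg hd] at h2
      rw [homogeneousComponent_eq_zero d g₀ (by simpa using hd), map_zero]
      exact h2
  -- so essRank F n d f ≤ t'
  have ht'mem : t' ∈ { r : ℕ | ∃ ℓ : Fin r → MvPolynomial (Fin n) F,
      (∀ i, (ℓ i).IsHomogeneous 1) ∧
      ∃ g : MvPolynomial (Fin r) F, g.IsHomogeneous d ∧ f = aeval ℓ g } :=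
    ⟨fam, hfamh, (homogeneousComponent d) g₀, homogeneousComponent_isHomogeneous d g₀, hfd⟩
  have hle : essRank F n d f ≤ t' := Nat.sInf_le ht'mem
  rw [hr] at hle
  -- dimension count : t' ≤ finrank U < finrank V ≤ r
  have hIU : (sV ∩ sW : Set (Fin n → F)) ⊆ (U : Set (Fin n → F)) := fun x hx =>
    Submodule.mem_inf.mpr ⟨hsVsub hx.1, hsWsub hx.2⟩
  have hIli : LinearIndependent F (Subtype.val : ↥(sV ∩ sW) → (Fin n → F)) :=
    LinearIndepOn.mono (v := id) hsVli Set.inter_subset_left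
  have h1 : t' ≤ Module.finrank F ↥U := by
    have hcard : Module.finrank F ↥(Submodule.span F (sV ∩ sW)) = (sV ∩ sW).toFinset.card :=
      finrank_span_set_eq_card hIli
    have h2 : (sV ∩ sW).toFinset.card = t' := Set.toFinset_card _
    rw [← h2, ← hcard]
    exact Submodule.finrank_mono (Submodule.span_le.2 hIU)
  have h2 : Module.finrank F ↥U < Module.finrank F ↥V := by
    refine Submodule.finrank_lt_finrank_of_lt (lt_of_le_of_ne inf_le_left ?_)
    intro heq
    exact hVW' (by rw [← heq]; exact inf_le_right)
  have h3 : Module.finrank F ↥V ≤ r := by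
    haveI : Fintype ↥(Set.range u) := Set.fintypeRange u
    refine (finrank_span_le_card (Set.range u)).trans ?_
    rw [Set.toFinset_range]
    exact (Finset.card_image_le).trans (by simp)
  omega
end

section
/- Let F be a field with char(F) = 0 or char(F) > d, let L/F be a cyclic Galois extension of degree n with Gal(L/F) generated by σ, let α^(1),…,α^(d) be F-bases of L and let 1 ≤ ρ ≤ n. Then every nonzero f ∈ C_ρ^{n,d}(α^(1),…,α^(d)) satisfies ess(f) ≥ ρ. -/
open MvPolynomial

/-- The directional-derivative operator `v(∂) = v₁∂₁ + … + v_n∂_n`. -/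
noncomputable def dirDeriv {L : Type*} [CommSemiring L] {n : ℕ} (v : Fin n → L) :
    Module.End L (MvPolynomial (Fin n) L) :=
  ∑ i, v i • (pderiv i).toLinearMap

/-- The product (composition) of the operators `w j (∂)` for `j = 1, …, d`. -/
noncomputable def opProd {L : Type*} [CommSemiring L] {n d : ℕ} (w : Fin d → Fin n → L) :
    Module.End L (MvPolynomial (Fin n) L) :=
  (List.ofFn fun j => dirDeriv (w j)).prod

/-- The code `C_ρ^{n,d}(α⁽¹⁾,…,α⁽ᵈ⁾)`: all `f ∈ S_{n,d}(F)` with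
`α⁽¹⁾(∂) σ^{r₂}(α⁽²⁾)(∂) ⋯ σ^{r_d}(α⁽ᵈ⁾)(∂) ∘ f = 0` for all `0 ≤ r₂, …, r_d ≤ ρ - 2`. -/
def codeC (F L : Type*) [Field F] [Field L] [Algebra F L] (n d ρ : ℕ)
    (σ : L ≃ₐ[F] L) (α : Fin d → Fin n → L) : Set (MvPolynomial (Fin n) F) :=
  { f | f.IsHomogeneous d ∧ ∀ r : Fin d → ℕ,
      (∀ j : Fin d, (j : ℕ) = 0 → r j = 0) →
      (∀ j : Fin d, (j : ℕ) ≠ 0 → r j + 2 ≤ ρ) →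
      opProd (fun j i => (σ ^ (r j)) (α j i)) (MvPolynomial.map (algebraMap F L) f) = 0 }

/-! ### Auxiliary lemmas -/

open Finset

section FinsuppAux

lemma MER.degree_one_eq_single {n : ℕ} (m : Fin n →₀ ℕ) (h : m.degree = 1) :
    ∃ k, m = Finsupp.single k 1 := by
  have hne : m ≠ 0 := by
    intro h0; rw [h0] at h; simp at h
  obtain ⟨k, hk⟩ : ∃ k, m k ≠ 0 := by
    by_contra hc; push_neg at hc
    exact hne (Finsupp.ext fun a => hc a)
  refine ⟨k, ?_⟩
  have hk1 : m k = 1 := le_antisymm (h ▸ Finsupp.le_degree k m) (Nat.one_le_iff_ne_zero.2 hk)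
  ext j
  rcases eq_or_ne j k with rfl | hj
  · simp [hk1]
  · simp only [Finsupp.single_apply, if_neg (Ne.symm hj)]
    by_contra hj0
    have h2 : 2 ≤ m.degree := by
      have hsub : ({k, j} : Finset (Fin n)) ⊆ m.support := by
        intro x hx
        simp only [Finset.mem_insert, Finset.mem_singleton] at hx
        rcases hx with rfl | rfl <;> simp [Finsupp.mem_support_iff, hk, hj0]
      calc 2 = 1 + 1 := rfl
      _ ≤ m k + m j := Nat.add_le_add (hk1.ge) (Nat.one_le_iff_ne_zero.2 hj0)
      _ = ∑ x ∈ ({k, j} : Finset (Fin n)), m x := by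
          rw [Finset.sum_insert (by simp [Ne.symm hj]), Finset.sum_singleton]
      _ ≤ m.degree := Finset.sum_le_sum_of_subset hsub
    omega

lemma MER.homog_one_eq_sum {K : Type*} [CommSemiring K] {n : ℕ} (p : MvPolynomial (Fin n) K)
    (hp : p.IsHomogeneous 1) :
    p = ∑ k, C (coeff (Finsupp.single k 1) p) * X k := by
  ext m
  rw [coeff_sum]
  simp only [coeff_C_mul, coeff_X']
  by_cases hm : ∃ k, m = Finsupp.single k 1
  · obtain ⟨k, rfl⟩ := hm
    rw [Finset.sum_eq_single k]
    · simp
    · intro b _ hb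
      rw [if_neg, mul_zero]
      intro he
      exact hb (Finsupp.single_left_injective one_ne_zero he.symm ▸ rfl)
    · simp
  · push_neg at hm
    have h0 : coeff m p = 0 := by
      by_contra hc
      have hd : m.degree = 1 := by
        rw [Finsupp.degree_eq_weight_one]; exact hp hc
      obtain ⟨k, hk⟩ := MER.degree_one_eq_single m hd
      exact hm k hk
    rw [h0]
    refine (Finset.sum_eq_zero fun k _ => ?_).symm
    rw [if_neg (fun he => hm k he.symm), mul_zero]

lemma MER.coeff_pderiv' {K : Type*} [CommSemiring K] {n : ℕ} (i : Fin n) (m : Fin n →₀ ℕ)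
    (f : MvPolynomial (Fin n) K) :
    coeff m (pderiv i f) = (m i + 1 : ℕ) * coeff (m + Finsupp.single i 1) f := by
  induction f using MvPolynomial.induction_on' with
  | monomial s a =>
    rw [pderiv_monomial, coeff_monomial, coeff_monomial]
    rcases eq_or_ne s (m + Finsupp.single i 1) with rfl | hs
    · rw [add_tsub_cancel_right, if_pos rfl, if_pos rfl, Finsupp.add_apply, Finsupp.single_eq_same]
      push_cast
      ring
    · rw [if_neg hs, mul_zero]
      by_cases hsi : s i = 0
      · rcases eq_or_ne (s - Finsupp.single i 1) m with he | he
        · rw [if_pos he, hsi]; simp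
        · rw [if_neg he]
      · rw [if_neg, ]
        intro he
        apply hs
        have hle : Finsupp.single i 1 ≤ s := by
          rw [Finsupp.single_le_iff]; omega
        rw [← he, tsub_add_cancel_of_le hle]
  | add p q hp hq =>
    rw [map_add, coeff_add, coeff_add, hp, hq, mul_add]

end FinsuppAux

section DerivAux

variable {L : Type*} [CommSemiring L] {n : ℕ}

lemma MER.pderiv_comm' (i k : Fin n) (f : MvPolynomial (Fin n) L) :
    pderiv i (pderiv k f) = pderiv k (pderiv i f) := by
  induction f using MvPolynomial.induction_on with
  | C a => simp
  | add p q hp hq => simp [hp, hq]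
  | mul_X p j hp =>
    simp only [pderiv_mul, pderiv_X, map_add, hp, map_mul]
    rcases eq_or_ne j i with rfl | hji <;> rcases eq_or_ne j k with rfl | hjk <;>
      simp [Pi.single_apply, *] <;> ring

lemma MER.dirDeriv_apply (v : Fin n → L) (f : MvPolynomial (Fin n) L) :
    dirDeriv v f = ∑ i, v i • pderiv i f := by
  simp [dirDeriv, LinearMap.sum_apply]

lemma MER.dirDeriv_commute (v w : Fin n → L) : Commute (dirDeriv v) (dirDeriv w) := by
  apply LinearMap.ext
  intro f
  simp only [Module.End.mul_apply, MER.dirDeriv_apply, map_sum, map_smul, Finset.smul_sum]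
  rw [Finset.sum_comm]
  refine Finset.sum_congr rfl fun i _ => Finset.sum_congr rfl fun k _ => ?_
  rw [MER.pderiv_comm']
  rw [smul_comm]

lemma MER.pderiv_aeval {r : ℕ} (k : Fin n) (ℓ : Fin r → MvPolynomial (Fin n) L)
    (g : MvPolynomial (Fin r) L) :
    pderiv k (aeval ℓ g) = ∑ i, pderiv k (ℓ i) * aeval ℓ (pderiv i g) := by
  induction g using MvPolynomial.induction_on with
  | C a => simp
  | add p q hp hq =>
    simp only [map_add, hp, hq, mul_add, Finset.sum_add_distrib]
  | mul_X p j hp =>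
    have h2 : ∀ i : Fin r, (pderiv i) (p * X j) = pderiv i p * X j + if j = i then p else 0 := by
      intro i
      rw [pderiv_mul, pderiv_X, Pi.single_apply]
      split <;> simp
    rw [map_mul, aeval_X, pderiv_mul, hp, Finset.sum_mul]
    simp only [h2, map_add, map_mul, aeval_X, apply_ite (aeval ℓ), map_zero, mul_add, mul_ite,
      mul_zero, Finset.sum_add_distrib, Finset.sum_ite_eq]
    simp only [Finset.mem_univ, if_true]
    congr 1
    · exact Finset.sum_congr rfl fun i _ => by ring
    · exact mul_comm _ _

end DerivAux

section Lists

variable {M : Type*} [Monoid M]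

lemma MER.list_prod_extract : ∀ {m : ℕ} (f : Fin (m + 1) → M),
    (∀ p q, Commute (f p) (f q)) → ∀ j : Fin (m + 1),
    (List.ofFn f).prod = (List.ofFn (f ∘ j.succAbove)).prod * f j := by
  intro m
  induction m with
  | zero =>
    intro f _ j
    have hj : j = 0 := Fin.eq_zero j
    subst hj
    simp
  | succ m ih =>
    intro f hc j
    induction j using Fin.cases with
    | zero =>
      rw [List.ofFn_succ, List.prod_cons]
      simp only [Function.comp_def, Fin.succAbove_zero]
      have : ∀ x ∈ List.ofFn fun i : Fin (m+1) => f i.succ, Commute (f 0) x := by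
        intro x hx
        rw [List.mem_ofFn] at hx
        obtain ⟨p, rfl⟩ := hx
        exact hc 0 _
      exact (Commute.list_prod_right _ _ this).eq
    | succ q =>
      rw [List.ofFn_succ, List.prod_cons, ih (fun i => f i.succ) (fun p q => hc _ _) q]
      have h1 : (List.ofFn (f ∘ (Fin.succ q).succAbove)) =
          f 0 :: List.ofFn ((fun i : Fin (m+1) => f i.succ) ∘ q.succAbove) := by
        rw [List.ofFn_succ]
        congr 1
        · apply congrArg
          funext p
          simp [Fin.succ_succAbove_succ]
      simp only [Function.comp_def] at h1 ⊢
      rw [h1, List.prod_cons, mul_assoc]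

end Lists

section OpAux

variable {L : Type*} [CommSemiring L] {n : ℕ}

lemma MER.opProd_extract {d : ℕ} (w : Fin (d + 1) → Fin n → L) (j : Fin (d + 1)) :
    opProd w = opProd (w ∘ j.succAbove) * dirDeriv (w j) := by
  unfold opProd
  exact MER.list_prod_extract _ (fun p q => MER.dirDeriv_commute _ _) j

lemma MER.pderiv_linear (c : Fin n → L) (k : Fin n) :
    pderiv k (∑ k', C (c k') * X k') = C (c k) := by
  rw [map_sum]
  rw [Finset.sum_eq_single k]
  · simp
  · intro b _ hb
    simp [pderiv_X, Pi.single_apply, hb]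
  · simp

lemma MER.dirDeriv_aeval {r : ℕ} (v : Fin n → L) (cL : Fin r → Fin n → L)
    (ℓ : Fin r → MvPolynomial (Fin n) L) (hℓ : ∀ i, ℓ i = ∑ k, C (cL i k) * X k)
    (h : MvPolynomial (Fin r) L) :
    dirDeriv v (aeval ℓ h) = ∑ i, (∑ k, v k * cL i k) • aeval ℓ (pderiv i h) := by
  rw [MER.dirDeriv_apply]
  have h1 : ∀ k, pderiv k (aeval ℓ h) = ∑ i, C (cL i k) * aeval ℓ (pderiv i h) := by
    intro k
    rw [MER.pderiv_aeval]
    refine Finset.sum_congr rfl fun i _ => ?_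
    rw [hℓ i, MER.pderiv_linear]
  simp only [h1, Finset.smul_sum]
  rw [Finset.sum_comm]
  refine Finset.sum_congr rfl fun i _ => ?_
  rw [Finset.sum_smul]
  refine Finset.sum_congr rfl fun k _ => ?_
  rw [smul_eq_C_mul, smul_eq_C_mul, map_mul, mul_assoc]

lemma MER.dirDeriv_unit (k : Fin n) :
    dirDeriv (fun i => if i = k then (1:L) else 0) = (pderiv k).toLinearMap := by
  unfold dirDeriv
  rw [Finset.sum_eq_single k]
  · simp
  · intro b _ hb; simp [if_neg hb]
  · simp

variable {F : Type*} [CommSemiring F] (φ : F →+* L)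

lemma MER.dirDeriv_map (vF : Fin n → F) (h : MvPolynomial (Fin n) F) :
    dirDeriv (fun i => φ (vF i)) (MvPolynomial.map φ h)
      = MvPolynomial.map φ (dirDeriv vF h) := by
  rw [MER.dirDeriv_apply, MER.dirDeriv_apply, map_sum]
  refine Finset.sum_congr rfl fun i _ => ?_
  rw [pderiv_map, smul_eq_C_mul, smul_eq_C_mul, map_mul, map_C]

lemma MER.opProd_map : ∀ {m : ℕ} (wF : Fin m → Fin n → F) (h : MvPolynomial (Fin n) F),
    opProd (fun p i => φ (wF p i)) (MvPolynomial.map φ h)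
      = MvPolynomial.map φ (opProd wF h) := by
  intro m
  unfold opProd
  induction m with
  | zero => intro wF h; simp
  | succ m ih =>
    intro wF h
    rw [List.ofFn_succ, List.ofFn_succ, List.prod_cons, List.prod_cons,
      Module.End.mul_apply, Module.End.mul_apply]
    rw [ih (fun p => wF p.succ) h, MER.dirDeriv_map]

lemma MER.map_aeval' {r : ℕ}
    (ℓ : Fin r → MvPolynomial (Fin n) F) (g : MvPolynomial (Fin r) F) :
    MvPolynomial.map φ (aeval ℓ g)
      = aeval (fun i => MvPolynomial.map φ (ℓ i)) (MvPolynomial.map φ g) := by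
  rw [MvPolynomial.map_aeval]
  rw [aeval_def, eval₂_map]
  rw [coe_eval₂Hom]
  congr 1
  ext a
  simp

end OpAux

section MooreAux

variable {F L : Type*} [Field F] [Field L] [Algebra F L]

lemma MER.moore (σ : L ≃ₐ[F] L) (hfix : ∀ x : L, σ x = x → ∃ y, algebraMap F L y = x) :
    ∀ (t : ℕ) (u : Fin t → L), LinearIndependent F u →
      ∀ lam : Fin t → L, (∀ s : Fin t, ∑ p, lam p * (σ ^ (s : ℕ)) (u p) = 0) → lam = 0 := by
  intro t
  induction t with
  | zero => intro u _ lam _; funext p; exact absurd p.2 (by omega)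
  | succ m ih =>
    intro u hu lam hrel
    by_contra hne
    obtain ⟨q, hq⟩ : ∃ q, lam q ≠ 0 := by
      by_contra hc; push_neg at hc; exact hne (funext hc)
    set μ : Fin (m + 1) → L := fun p => lam p / lam q with hμ
    have hμq : μ q = 1 := div_self hq
    have hμrel : ∀ s : Fin (m + 1), ∑ p, μ p * (σ ^ (s : ℕ)) (u p) = 0 := by
      intro s
      have := hrel s
      calc ∑ p, μ p * (σ ^ (s : ℕ)) (u p) = (lam q)⁻¹ * ∑ p, lam p * (σ ^ (s : ℕ)) (u p) := by
            rw [Finset.mul_sum]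
            exact Finset.sum_congr rfl fun p _ => by rw [hμ]; ring
        _ = 0 := by rw [this, mul_zero]
    set ν : Fin m → L := fun p => σ.symm (σ (μ (q.succAbove p)) - μ (q.succAbove p)) with hν
    have hνrel : ∀ s : Fin m, ∑ p, ν p * (σ ^ (s : ℕ)) (u (q.succAbove p)) = 0 := by
      intro s
      have h1 : ∑ p : Fin (m + 1), σ (μ p) * (σ ^ ((s : ℕ) + 1)) (u p) = 0 := by
        have := hμrel s.castSucc
        have happ := congrArg σ this
        rw [map_sum, map_zero] at happ
        rw [← happ]
        refine Finset.sum_congr rfl fun p _ => ?_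
        rw [map_mul]
        congr 1
        rw [pow_succ']
        rfl
      have h2 : ∑ p : Fin (m + 1), μ p * (σ ^ ((s : ℕ) + 1)) (u p) = 0 := by
        have := hμrel s.succ
        simpa using this
      have h3 : ∑ p : Fin (m + 1), (σ (μ p) - μ p) * (σ ^ ((s : ℕ) + 1)) (u p) = 0 := by
        simp only [sub_mul]
        rw [Finset.sum_sub_distrib, h1, h2, sub_zero]
      rw [Fin.sum_univ_succAbove _ q] at h3
      rw [hμq] at h3
      simp only [map_one, sub_self, zero_mul, zero_add] at h3
      have happ := congrArg σ.symm h3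
      rw [map_sum, map_zero] at happ
      rw [← happ]
      refine Finset.sum_congr rfl fun p _ => ?_
      rw [map_mul, hν]
      congr 1
      rw [pow_succ', AlgEquiv.mul_apply, AlgEquiv.symm_apply_apply]
    have hν0 : ν = 0 := ih (fun p => u (q.succAbove p))
      (hu.comp q.succAbove (Fin.succAbove_right_injective)) ν hνrel
    have hfixall : ∀ p : Fin (m + 1), ∃ y, algebraMap F L y = μ p := by
      intro p
      rcases eq_or_ne p q with rfl | hpq
      · exact ⟨1, by rw [map_one, hμq]⟩
      · obtain ⟨p', rfl⟩ := Fin.exists_succAbove_eq hpq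
        apply hfix
        have : ν p' = 0 := by rw [hν0]; rfl
        rw [hν] at this
        have := congrArg σ this
        rw [map_zero] at this
        rw [σ.apply_symm_apply] at this
        exact sub_eq_zero.mp this
    choose e he using hfixall
    have h0 : ∑ p, e p • u p = 0 := by
      have := hμrel 0
      simp only [Fin.val_zero, pow_zero, AlgEquiv.one_apply] at this
      rw [← this]
      exact Finset.sum_congr rfl fun p _ => by rw [Algebra.smul_def, he]
    have he0 := linearIndependent_iff'.mp hu Finset.univ e h0
    have : μ q = 0 := by rw [← he q, he0 q (Finset.mem_univ q), map_zero]
    rw [hμq] at this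
    exact one_ne_zero this

lemma MER.solve_system {L M : Type*} [Field L] [AddCommGroup M] [Module L M] {t : ℕ}
    (A : Matrix (Fin t) (Fin t) L) (hA : IsUnit A.det) (Q : Fin t → M)
    (h : ∀ s, ∑ p, A s p • Q p = 0) : ∀ p, Q p = 0 := by
  intro p
  have hinv : A⁻¹ * A = 1 := Matrix.nonsing_inv_mul A hA
  have h2 : ∑ s, A⁻¹ p s • (∑ p', A s p' • Q p') = (0 : M) := by
    simp only [h, smul_zero, Finset.sum_const_zero]
  calc Q p = ∑ p', ((A⁻¹ * A) p p') • Q p' := by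
        rw [hinv]
        simp [Matrix.one_apply, ite_smul]
    _ = ∑ p', (∑ s, A⁻¹ p s * A s p') • Q p' := by
        refine Finset.sum_congr rfl fun p' _ => ?_
        rw [Matrix.mul_apply]
    _ = ∑ p', ∑ s, (A⁻¹ p s * A s p') • Q p' := by
        refine Finset.sum_congr rfl fun p' _ => ?_
        rw [Finset.sum_smul]
    _ = ∑ s, ∑ p', (A⁻¹ p s * A s p') • Q p' := Finset.sum_comm
    _ = ∑ s, A⁻¹ p s • (∑ p', A s p' • Q p') := by
        refine Finset.sum_congr rfl fun s _ => ?_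
        rw [Finset.smul_sum]
        exact Finset.sum_congr rfl fun p' _ => (smul_smul _ _ _).symm
    _ = 0 := h2

lemma MER.keyClaim (σ : L ≃ₐ[F] L) (hfix : ∀ x : L, σ x = x → ∃ y, algebraMap F L y = x)
    {n r ρ : ℕ} (hr : r < ρ) (α : Fin n → L) (hα : LinearIndependent F α)
    {M : Type*} [AddCommGroup M] [Module L M] (c : Fin r → Fin n → F) (Q : Fin r → M)
    (H : ∀ s : ℕ, s + 2 ≤ ρ →
      ∑ i, (∑ k, (σ ^ s) (α k) * algebraMap F L (c i k)) • Q i = 0) :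
    ∀ v : Fin n → L, ∑ i, (∑ k, v k * algebraMap F L (c i k)) • Q i = 0 := by
  classical
  set W : Submodule F (Fin n → F) := Submodule.span F (Set.range c) with hW
  have hWfin : FiniteDimensional F W := FiniteDimensional.span_of_finite F (Set.finite_range c)
  set t : ℕ := Module.finrank F W with ht
  have htr : t ≤ r := by
    have h1 := finrank_range_le_card (R := F) c
    rw [Set.finrank] at h1
    exact h1.trans_eq (by simp)
  obtain ⟨b⟩ : Nonempty (Module.Basis (Fin t) F W) := ⟨Module.finBasisOfFinrankEq F W rfl⟩
  have hmem : ∀ i, c i ∈ W := fun i => Submodule.subset_span (Set.mem_range_self i)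
  set e : Fin r → Fin t → F := fun i p => b.repr ⟨c i, hmem i⟩ p with he
  have hce : ∀ i k, c i k = ∑ p, e i p * (b p : Fin n → F) k := by
    intro i k
    have h2 := congrArg W.subtype (b.sum_repr ⟨c i, hmem i⟩)
    rw [map_sum] at h2
    simp only [map_smul, Submodule.coe_subtype] at h2
    have h3 := congrFun h2 k
    rw [Finset.sum_apply] at h3
    simp only [Pi.smul_apply, smul_eq_mul] at h3
    exact h3.symm
  set u : Fin t → L := fun p => ∑ k, ((b p : Fin n → F) k) • α k with hu
  have huind : LinearIndependent F u := by
    have hbi : LinearIndependent F (fun p => ((b p : Fin n → F))) :=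
      b.linearIndependent.map' W.subtype (Submodule.ker_subtype W)
    set ι : (Fin n → F) →ₗ[F] L :=
      { toFun := fun w => ∑ k, w k • α k
        map_add' := by intro x y; simp [add_smul, Finset.sum_add_distrib]
        map_smul' := by intro a x; simp [Finset.smul_sum, smul_smul] } with hι
    have hιinj : Function.Injective ι := by
      rw [← LinearMap.ker_eq_bot, Submodule.eq_bot_iff]
      intro w hw
      have h4 := linearIndependent_iff'.mp hα Finset.univ w hw
      funext k
      exact h4 k (Finset.mem_univ k)
    exact (hbi.map' ι (LinearMap.ker_eq_bot.mpr hιinj) : _)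
  set Q' : Fin t → M := fun p => ∑ i, (algebraMap F L (e i p)) • Q i with hQ'
  have key : ∀ z : Fin n → L,
      ∑ i, (∑ k, z k * algebraMap F L (c i k)) • Q i
        = ∑ p, (∑ k, z k * algebraMap F L ((b p : Fin n → F) k)) • Q' p := by
    intro z
    have hsc : ∀ i, ∑ k, z k * algebraMap F L (c i k)
        = ∑ p, algebraMap F L (e i p) * (∑ k, z k * algebraMap F L ((b p : Fin n → F) k)) := by
      intro i
      have : ∀ k, z k * algebraMap F L (c i k)
          = ∑ p, algebraMap F L (e i p) * (z k * algebraMap F L ((b p : Fin n → F) k)) := by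
        intro k
        rw [hce i k, map_sum, Finset.mul_sum]
        refine Finset.sum_congr rfl fun p _ => ?_
        rw [map_mul]
        ring
      rw [Finset.sum_congr rfl fun k _ => this k, Finset.sum_comm]
      refine Finset.sum_congr rfl fun p _ => ?_
      rw [Finset.mul_sum]
    calc ∑ i, (∑ k, z k * algebraMap F L (c i k)) • Q i
        = ∑ i, ∑ p, (algebraMap F L (e i p)
            * (∑ k, z k * algebraMap F L ((b p : Fin n → F) k))) • Q i := by
          refine Finset.sum_congr rfl fun i _ => ?_
          rw [hsc i, Finset.sum_smul]
      _ = ∑ p, (∑ k, z k * algebraMap F L ((b p : Fin n → F) k)) • Q' p := by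
          rw [Finset.sum_comm]
          refine Finset.sum_congr rfl fun p _ => ?_
          rw [hQ', Finset.smul_sum]
          refine Finset.sum_congr rfl fun i _ => ?_
          rw [smul_smul, mul_comm]
  set A : Matrix (Fin t) (Fin t) L := Matrix.of (fun s p => (σ ^ (s : ℕ)) (u p)) with hA
  have hsu : ∀ (s : ℕ) (p), ∑ k, (σ ^ s) (α k) * algebraMap F L ((b p : Fin n → F) k)
      = (σ ^ s) (u p) := by
    intro s p
    rw [hu, map_sum]
    refine Finset.sum_congr rfl fun k _ => ?_
    rw [Algebra.smul_def, map_mul, AlgEquiv.commutes]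
    ring
  have hAdet : IsUnit A.det := by
    rw [isUnit_iff_ne_zero]
    intro hdet
    obtain ⟨v, hv0, hv⟩ := (Matrix.exists_mulVec_eq_zero_iff).mpr hdet
    refine hv0 (MER.moore σ hfix t u huind v fun s => ?_)
    have := congrFun hv s
    rw [Matrix.mulVec, dotProduct] at this
    simp only [Pi.zero_apply] at this
    rw [← this]
    exact Finset.sum_congr rfl fun p _ => by rw [hA]; simp [mul_comm]
  have hQ'0 : ∀ p, Q' p = 0 := by
    refine MER.solve_system A hAdet Q' fun s => ?_
    have hH := H (s : ℕ) (by omega)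
    rw [key (fun k => (σ ^ (s : ℕ)) (α k))] at hH
    rw [← hH]
    refine Finset.sum_congr rfl fun p _ => ?_
    rw [hA, hsu]
    rfl
  intro v
  rw [key v]
  simp only [hQ'0, smul_zero, Finset.sum_const_zero]

end MooreAux

section IterAux

lemma MER.isHomogeneous_pderiv {K : Type*} [CommSemiring K] {n : ℕ} {D : ℕ}
    {f : MvPolynomial (Fin n) K} (hf : f.IsHomogeneous (D + 1)) (i : Fin n) :
    (pderiv i f).IsHomogeneous D := by
  intro m hm
  rw [MER.coeff_pderiv'] at hm
  have h1 : coeff (m + Finsupp.single i 1) f ≠ 0 := by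
    intro h; rw [h, mul_zero] at hm; exact hm rfl
  have h2 := hf h1
  rw [map_add] at h2
  have h3 : (Finsupp.weight 1) (Finsupp.single i (1:ℕ)) = 1 := by
    simp [Finsupp.weight_apply, Finsupp.sum_single_index]
  rw [h3] at h2
  omega

lemma MER.iter_pderiv_zero {K : Type*} [Field K] {n : ℕ} :
    ∀ (D : ℕ) (f : MvPolynomial (Fin n) K), f.IsHomogeneous D →
      (∀ m : ℕ, m ≤ D → m ≠ 0 → (m : K) ≠ 0) →
      (∀ k : Fin D → Fin n,
        (List.ofFn fun j =>
          ((pderiv (k j)).toLinearMap : Module.End K (MvPolynomial (Fin n) K))).prod f = 0) →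
      f = 0 := by
  intro D
  induction D with
  | zero =>
    intro f _ _ hder
    have := hder Fin.elim0
    simpa using this
  | succ D ih =>
    intro f hf hchar hder
    have hder1 : ∀ kk : Fin n, pderiv kk f = 0 := by
      intro kk
      refine ih (pderiv kk f) (MER.isHomogeneous_pderiv hf kk)
        (fun m hm hm0 => hchar m (by omega) hm0) (fun k' => ?_)
      have := hder (Fin.snoc k' kk)
      rw [List.ofFn_succ'] at this
      rw [List.concat_eq_append, List.prod_append, List.prod_cons, List.prod_nil] at this
      simp only [Fin.snoc_castSucc, Fin.snoc_last, mul_one] at this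
      rw [Module.End.mul_apply] at this
      convert this using 2
      rfl
    ext m
    rw [coeff_zero]
    by_contra hm
    have hdeg := hf hm
    obtain ⟨kk, hkk⟩ : ∃ kk, m kk ≠ 0 := by
      by_contra hc; push_neg at hc
      have : m = 0 := Finsupp.ext fun a => hc a
      rw [this] at hdeg
      simp at hdeg
    have h5 : Finsupp.single kk 1 ≤ m := by
      rw [Finsupp.single_le_iff]; omega
    have h6 : (m - Finsupp.single kk 1) + Finsupp.single kk 1 = m := tsub_add_cancel_of_le h5
    have h7 := MER.coeff_pderiv' kk (m - Finsupp.single kk 1) f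
    rw [hder1 kk, coeff_zero, h6] at h7
    have h8 : ((m - Finsupp.single kk 1 : Fin n →₀ ℕ)) kk + 1 = m kk := by
      rw [Finsupp.tsub_apply, Finsupp.single_eq_same]
      omega
    rw [h8] at h7
    have h9 : m kk ≤ D + 1 := by
      have h10 : (Finsupp.weight 1) m = m.degree := by
        rw [Finsupp.degree_eq_weight_one]; rfl
      have := Finsupp.le_degree kk m
      omega
    exact (mul_ne_zero (hchar (m kk) h9 hkk) hm) h7.symm

end IterAux

/-- Every nonzero codeword of `C_ρ^{n,d}(α⁽¹⁾,…,α⁽ᵈ⁾)` has essential rank at least `ρ`. -/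
theorem min_essential_rank_of_code
    {F L : Type*} [Field F] [Field L] [Algebra F L]
    [IsGalois F L] [FiniteDimensional F L]
    {n d ρ : ℕ} (hd : 1 ≤ d) (hρ1 : 1 ≤ ρ) (hρn : ρ ≤ n)
    (hchar : ringChar F = 0 ∨ d < ringChar F)
    (hn : Module.finrank F L = n)
    (σ : L ≃ₐ[F] L) (hσ : ∀ τ : L ≃ₐ[F] L, ∃ m : ℕ, τ = σ ^ m)
    (α : Fin d → Fin n → L) (hα : ∀ j, ∃ b : Module.Basis (Fin n) F L, ⇑b = α j)
    (f : MvPolynomial (Fin n) F) (hf : f ∈ codeC F L n d ρ σ α) (hf0 : f ≠ 0) :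
    ρ ≤ essRank F n d f := by
  classical
  obtain ⟨hfh, hcode⟩ := hf
  -- the fixed field of σ is F
  have hfix : ∀ x : L, σ x = x → ∃ y, algebraMap F L y = x := by
    intro x hx
    have hpow : ∀ m : ℕ, (σ ^ m) x = x := by
      intro m
      induction m with
      | zero => simp
      | succ m ihm => rw [pow_succ, AlgEquiv.mul_apply, hx, ihm]
    have hall : ∀ τ : L ≃ₐ[F] L, τ x = x := by
      intro τ
      obtain ⟨m, rfl⟩ := hσ τ
      exact hpow m
    have hbot : x ∈ (⊥ : IntermediateField F L) := by
      rw [← IsGalois.fixedField_fixingSubgroup (⊥ : IntermediateField F L)]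
      intro g
      exact hall g
    rw [IntermediateField.mem_bot] at hbot
    obtain ⟨y, hy⟩ := hbot
    exact ⟨y, hy⟩
  -- char condition on L
  have hφinj : Function.Injective (algebraMap F L) := (algebraMap F L).injective
  have hcharL : ∀ m : ℕ, m ≤ d → m ≠ 0 → (m : L) ≠ 0 := by
    intro m hm hm0
    have hF : (m : F) ≠ 0 := by
      rcases hchar with h0 | hp
      · have : CharP F 0 := h0 ▸ ringChar.charP F
        haveI : CharZero F := CharP.charP_to_charZero F
        exact_mod_cast Nat.cast_ne_zero.mpr hm0
      · have hcp : CharP F (ringChar F) := ringChar.charP F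
        intro hF0
        rw [CharP.cast_eq_zero_iff F (ringChar F) m] at hF0
        have := Nat.le_of_dvd (Nat.pos_of_ne_zero hm0) hF0
        omega
    intro hL
    apply hF
    apply hφinj
    rw [map_natCast, map_zero]
    exact hL
  -- reduce to a single representation
  unfold essRank
  apply le_csInf
  · exact ⟨n, X, fun i => isHomogeneous_X _ _, f, hfh, (aeval_X_left_apply f).symm⟩
  rintro r ⟨ℓ, hℓ, g, hg, hfg⟩
  by_contra hlt
  push_neg at hlt
  apply hf0
  -- setup
  set φ : F →+* L := (algebraMap F L : F →+* L) with hφ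
  set c : Fin r → Fin n → F := fun i k => coeff (Finsupp.single k 1) (ℓ i) with hc
  have hℓeq : ∀ i, ℓ i = ∑ k, C (c i k) * X k := fun i => MER.homog_one_eq_sum (ℓ i) (hℓ i)
  set ℓL : Fin r → MvPolynomial (Fin n) L := fun i => MvPolynomial.map φ (ℓ i) with hℓL
  have hℓLeq : ∀ i, ℓL i = ∑ k, C (φ (c i k)) * X k := by
    intro i
    show MvPolynomial.map φ (ℓ i) = _
    conv_lhs => rw [hℓeq i]
    rw [map_sum]
    refine Finset.sum_congr rfl fun k _ => ?_
    rw [map_mul, MvPolynomial.map_C, MvPolynomial.map_X]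
  set gL : MvPolynomial (Fin r) L := MvPolynomial.map φ g with hgL
  have hfL : MvPolynomial.map φ f = aeval ℓL gL := by
    rw [hfg, MER.map_aeval']
  have hchain : ∀ v : Fin n → L, dirDeriv v (MvPolynomial.map φ f)
      = ∑ i, (∑ k, v k * φ (c i k)) • aeval ℓL (pderiv i gL) := by
    intro v
    rw [hfL]
    exact MER.dirDeriv_aeval v (fun i k => φ (c i k)) ℓL hℓLeq gL
  obtain ⟨d', rfl⟩ : ∃ d', d = d' + 1 := ⟨d - 1, by omega⟩
  -- main induction: freeing slots from the end
  have main : ∀ m : ℕ, m ≤ d' → ∀ w : Fin (d' + 1) → Fin n → L,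
      (∀ j : Fin (d' + 1), (j : ℕ) + m < d' + 1 → ∃ s : ℕ, ((j : ℕ) = 0 → s = 0) ∧
        ((j : ℕ) ≠ 0 → s + 2 ≤ ρ) ∧ w j = fun i => (σ ^ s) (α j i)) →
      opProd w (MvPolynomial.map φ f) = 0 := by
    intro m
    induction m with
    | zero =>
      intro _ w hw
      choose s hs0 hsρ hws using fun j => hw j (by omega)
      have hweq : w = fun j i => (σ ^ (s j)) (α j i) := funext fun j => hws j
      rw [hweq]
      exact hcode s hs0 hsρ
    | succ m ih =>
      intro hm w hw
      set j0 : Fin (d' + 1) := ⟨d' - m, by omega⟩ with hj0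
      have hj0ne : (j0 : ℕ) ≠ 0 := by
        simp only [hj0]
        omega
      have hΦ : ∀ v, opProd (Function.update w j0 v) (MvPolynomial.map φ f)
          = ∑ i, (∑ k, v k * φ (c i k)) •
              (opProd (w ∘ j0.succAbove) (aeval ℓL (pderiv i gL))) := by
        intro v
        rw [MER.opProd_extract (Function.update w j0 v) j0]
        have h1 : (Function.update w j0 v) ∘ j0.succAbove = w ∘ j0.succAbove := by
          funext p
          simp only [Function.comp_apply]
          rw [Function.update_of_ne (Fin.succAbove_ne j0 p)]
        have h2 : Function.update w j0 v j0 = v := Function.update_self _ _ _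
        rw [Module.End.mul_apply, h1, h2, hchain v, map_sum]
        exact Finset.sum_congr rfl fun i _ => (map_smul _ _ _)
      have hH : ∀ s : ℕ, s + 2 ≤ ρ →
          ∑ i, (∑ k, (σ ^ s) (α j0 k) * φ (c i k)) •
            (opProd (w ∘ j0.succAbove) (aeval ℓL (pderiv i gL))) = 0 := by
        intro s hs
        rw [← hΦ (fun i => (σ ^ s) (α j0 i))]
        apply ih (by omega)
        intro j hj
        rcases eq_or_ne j j0 with rfl | hne
        · exact ⟨s, fun h => absurd h hj0ne, fun _ => hs, by rw [Function.update_self]⟩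
        · have hvne : (j : ℕ) ≠ (j0 : ℕ) := fun hv => hne (Fin.ext hv)
          have hj' : (j : ℕ) + (m + 1) < d' + 1 := by
            have : (j0 : ℕ) = d' - m := rfl
            omega
          obtain ⟨s', h1, h2, h3⟩ := hw j hj'
          exact ⟨s', h1, h2, by rw [Function.update_of_ne hne, h3]⟩
      obtain ⟨b0, hb0⟩ := hα j0
      have hαind : LinearIndependent F (α j0) := hb0 ▸ b0.linearIndependent
      have hfree := MER.keyClaim σ hfix hlt (α j0) hαind c _ hH (w j0)
      rw [← hΦ (w j0)] at hfree
      rw [Function.update_eq_self] at hfree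
      exact hfree
  -- stage 1: only slot 0 constrained
  have stage1 : ∀ w : Fin (d' + 1) → Fin n → L, w 0 = (fun i => α 0 i) →
      opProd w (MvPolynomial.map φ f) = 0 := by
    intro w hw0
    apply main d' le_rfl w
    intro j hj
    have hjv : (j : ℕ) = 0 := by omega
    have hj0 : j = 0 := Fin.ext hjv
    refine ⟨0, fun _ => rfl, fun h => absurd hjv h, ?_⟩
    subst hj0
    rw [hw0]
    funext i
    simp
  -- stage 2: slot 0 free, other slots F-rational
  have stage2 : ∀ (v : Fin n → L) (wF : Fin (d' + 1) → Fin n → F),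
      opProd (Function.update (fun j i => φ (wF j i)) 0 v) (MvPolynomial.map φ f) = 0 := by
    intro v wF
    set wL : Fin (d' + 1) → Fin n → L := fun j i => φ (wF j i) with hwL
    set q : Fin r → MvPolynomial (Fin n) F :=
      fun i => opProd (fun p => wF ((0 : Fin (d' + 1)).succAbove p)) (aeval ℓ (pderiv i g))
      with hq
    have hQq : ∀ i, opProd (wL ∘ (0 : Fin (d' + 1)).succAbove) (aeval ℓL (pderiv i gL))
        = MvPolynomial.map φ (q i) := by
      intro i
      have h1 : aeval ℓL (pderiv i gL) = MvPolynomial.map φ (aeval ℓ (pderiv i g)) := by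
        rw [hgL, pderiv_map, ← MER.map_aeval']
      rw [h1, hq]
      exact MER.opProd_map φ (fun p => wF ((0 : Fin (d' + 1)).succAbove p)) _
    have hΦ0 : ∀ z : Fin n → L, opProd (Function.update wL 0 z) (MvPolynomial.map φ f)
        = ∑ i, (∑ k, z k * φ (c i k)) • MvPolynomial.map φ (q i) := by
      intro z
      rw [MER.opProd_extract (Function.update wL 0 z) 0]
      have h1 : (Function.update wL 0 z) ∘ (0 : Fin (d' + 1)).succAbove
          = wL ∘ (0 : Fin (d' + 1)).succAbove := by
        funext p
        simp only [Function.comp_apply]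
        rw [Function.update_of_ne (Fin.succAbove_ne 0 p)]
      have h2 : Function.update wL 0 z 0 = z := Function.update_self _ _ _
      rw [Module.End.mul_apply, h1, h2, hchain z, map_sum]
      refine Finset.sum_congr rfl fun i _ => ?_
      rw [map_smul, hQq i]
    -- rearrangement
    set T : Fin n → MvPolynomial (Fin n) F := fun k => ∑ i, c i k • q i with hT
    have hre : ∀ z : Fin n → L, ∑ i, (∑ k, z k * φ (c i k)) • MvPolynomial.map φ (q i)
        = ∑ k, z k • MvPolynomial.map φ (T k) := by
      intro z
      have hTm : ∀ k, MvPolynomial.map φ (T k) = ∑ i, φ (c i k) • MvPolynomial.map φ (q i) := by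
        intro k
        rw [hT, map_sum]
        refine Finset.sum_congr rfl fun i _ => ?_
        rw [smul_eq_C_mul, smul_eq_C_mul, map_mul, MvPolynomial.map_C]
      calc ∑ i, (∑ k, z k * φ (c i k)) • MvPolynomial.map φ (q i)
          = ∑ i, ∑ k, (z k * φ (c i k)) • MvPolynomial.map φ (q i) := by
            exact Finset.sum_congr rfl fun i _ => Finset.sum_smul
        _ = ∑ k, ∑ i, (z k * φ (c i k)) • MvPolynomial.map φ (q i) := Finset.sum_comm
        _ = ∑ k, z k • MvPolynomial.map φ (T k) := by
            refine Finset.sum_congr rfl fun k _ => ?_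
            rw [hTm k, Finset.smul_sum]
            refine Finset.sum_congr rfl fun i _ => ?_
            rw [smul_smul]
    -- slot 0 at α 0 vanishes
    have hα0 : ∑ k, α 0 k • MvPolynomial.map φ (T k) = 0 := by
      rw [← hre (fun k => α 0 k)]
      rw [← hΦ0 (fun k => α 0 k)]
      apply stage1
      rw [Function.update_self]
    -- independence kills T
    obtain ⟨b0, hb0⟩ := hα 0
    have hαind : LinearIndependent F (α 0) := hb0 ▸ b0.linearIndependent
    have hT0 : ∀ k, T k = 0 := by
      intro k
      ext mm
      rw [coeff_zero]
      have hco := congrArg (coeff mm) hα0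
      rw [coeff_sum, coeff_zero] at hco
      have hco2 : ∑ k', coeff mm (T k') • α 0 k' = 0 := by
        rw [← hco]
        refine Finset.sum_congr rfl fun k' _ => ?_
        rw [coeff_smul, coeff_map, Algebra.smul_def, smul_eq_mul]
        ring
      exact linearIndependent_iff'.mp hαind Finset.univ _ hco2 k (Finset.mem_univ k)
    rw [hΦ0 v, hre v]
    refine Finset.sum_eq_zero fun k _ => ?_
    rw [hT0 k, map_zero, smul_zero]
  -- conclude: all iterated partials of map φ f vanish
  have hiter : ∀ k0 : Fin (d' + 1) → Fin n,
      (List.ofFn fun j =>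
        ((pderiv (k0 j)).toLinearMap : Module.End L (MvPolynomial (Fin n) L))).prod
        (MvPolynomial.map φ f) = 0 := by
    intro k0
    have h1 := stage2 (fun i => if i = k0 0 then (1 : L) else 0)
      (fun j i => if i = k0 j then (1 : F) else 0)
    have h2 : Function.update (fun j i => φ (if i = k0 j then (1 : F) else 0)) 0
        (fun i => if i = k0 0 then (1 : L) else 0)
        = fun j i => if i = k0 j then (1 : L) else 0 := by
      funext j
      rcases eq_or_ne j 0 with rfl | hj
      · rw [Function.update_self]
      · rw [Function.update_of_ne hj]
        funext i
        rw [apply_ite φ, map_one, map_zero]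
    rw [h2] at h1
    have h3 : opProd (fun j i => if i = k0 j then (1 : L) else 0)
        = (List.ofFn fun j =>
            ((pderiv (k0 j)).toLinearMap : Module.End L (MvPolynomial (Fin n) L))).prod := by
      unfold opProd
      congr 1
      apply congrArg
      funext j
      exact MER.dirDeriv_unit (k0 j)
    rw [h3] at h1
    exact h1
  have hmap0 : MvPolynomial.map φ f = 0 :=
    MER.iter_pderiv_zero (d' + 1) (MvPolynomial.map φ f) (hfh.map φ) hcharL hiter
  exact MvPolynomial.map_injective φ hφinj (by rw [hmap0, map_zero])
end

section
/- Let F be a field, L/F a cyclic Galois extension of degree n with Gal(L/F) generated by σ, and α an F-basis of L. Let f ∈ S_{n,d}(F) and r_1,…,r_d, s_1,…,s_d ∈ ℤ, and suppose there exists x ∈ ℤ with r_j ≡ x + s_j (mod n) for all j ∈ {1,…,d}. Then σ^{r_1}(α)(∂) ⋯ σ^{r_d}(α)(∂) ∘ f = 0 if and only if σ^{s_1}(α)(∂) ⋯ σ^{s_d}(α)(∂) ∘ f = 0. -/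
open MvPolynomial

lemma dirDeriv_map {L : Type*} [CommSemiring L] {n : ℕ} (τ : L →+* L) (v : Fin n → L)
    (p : MvPolynomial (Fin n) L) :
    dirDeriv (fun i => τ (v i)) (MvPolynomial.map τ p) = MvPolynomial.map τ (dirDeriv v p) := by
  simp only [dirDeriv, LinearMap.sum_apply, LinearMap.smul_apply,
    Derivation.coeFn_coe, map_sum]
  refine Finset.sum_congr rfl fun i _ => ?_
  rw [pderiv_map, MvPolynomial.smul_eq_C_mul, MvPolynomial.smul_eq_C_mul, map_mul,
    MvPolynomial.map_C]

lemma opProd_map {L : Type*} [CommSemiring L] {n d : ℕ} (τ : L →+* L)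
    (w : Fin d → Fin n → L) (p : MvPolynomial (Fin n) L) :
    opProd (fun j i => τ (w j i)) (MvPolynomial.map τ p) =
      MvPolynomial.map τ (opProd w p) := by
  induction d with
  | zero => simp [opProd]
  | succ d ih =>
      have h1 : opProd w = dirDeriv (w 0) * opProd (fun j => w j.succ) := by
        simp [opProd, List.ofFn_succ]
      have h2 : opProd (fun j i => τ (w j i)) =
          dirDeriv (fun i => τ (w 0 i)) * opProd (fun j i => τ (w j.succ i)) := by
        simp [opProd, List.ofFn_succ]
      rw [h1, h2, Module.End.mul_apply, Module.End.mul_apply,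
        ih (fun j => w j.succ), dirDeriv_map]

/-- If `r_j ≡ x + s_j (mod n)` for all `j`, then
`σ^{r₁}(α)(∂) ⋯ σ^{r_d}(α)(∂) ∘ f = 0` if and only if
`σ^{s₁}(α)(∂) ⋯ σ^{s_d}(α)(∂) ∘ f = 0`. -/
theorem shifted_conditions_equivalent
    {F L : Type*} [Field F] [Field L] [Algebra F L]
    [IsGalois F L] [FiniteDimensional F L]
    {n d : ℕ} (hn : Module.finrank F L = n)
    (σ : L ≃ₐ[F] L) (hσ : ∀ τ : L ≃ₐ[F] L, ∃ m : ℕ, τ = σ ^ m)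
    (α : Fin n → L) (hα : ∃ b : Module.Basis (Fin n) F L, ⇑b = α)
    (f : MvPolynomial (Fin n) F) (hf : f.IsHomogeneous d)
    (r s : Fin d → ℤ) (x : ℤ) (hx : ∀ j, (n : ℤ) ∣ r j - (x + s j)) :
    opProd (fun j i => (σ ^ r j) (α i)) (MvPolynomial.map (algebraMap F L) f) = 0 ↔
      opProd (fun j i => (σ ^ s j) (α i)) (MvPolynomial.map (algebraMap F L) f) = 0 := by
  have hcard : Fintype.card (L ≃ₐ[F] L) = n := by
    rw [← Nat.card_eq_fintype_card, IsGalois.card_aut_eq_finrank, hn]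
  have hσn : σ ^ (n : ℤ) = 1 := by
    rw [zpow_natCast, ← hcard]; exact pow_card_eq_one
  set τ : L ≃ₐ[F] L := σ ^ x with hτ
  have hpow : ∀ j : Fin d, σ ^ r j = τ * σ ^ s j := by
    intro j
    obtain ⟨k, hk⟩ := hx j
    have : r j = x + s j + n * k := by linarith
    rw [this, zpow_add, zpow_add, zpow_mul, hσn, one_zpow, mul_one]
  have hcoeff : (fun j i => (σ ^ r j) (α i)) = fun j i => τ ((σ ^ s j) (α i)) := by
    funext j i
    rw [hpow j]
    rfl
  have hfix : MvPolynomial.map (τ : L →+* L) (MvPolynomial.map (algebraMap F L) f) =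
      MvPolynomial.map (algebraMap F L) f := by
    rw [MvPolynomial.map_map]
    exact congrArg (fun g : F →+* L => MvPolynomial.map g f) (RingHom.ext fun a => τ.commutes a)
  have key : opProd (fun j i => τ ((σ ^ s j) (α i))) (MvPolynomial.map (algebraMap F L) f) =
      MvPolynomial.map (τ : L →+* L)
        (opProd (fun j i => (σ ^ s j) (α i)) (MvPolynomial.map (algebraMap F L) f)) := by
    conv_lhs => rw [← hfix]
    exact opProd_map (τ : L →+* L) (fun j i => (σ ^ s j) (α i)) _
  rw [hcoeff, key]
  exact map_eq_zero_iff (MvPolynomial.map (τ : L →+* L))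
    (MvPolynomial.map_injective _ τ.injective)
end

section
/- For all integers d ≥ 2, n ≥ 1 and 1 ≤ r ≤ n, the inequality C(n+d−2, d−1)·(n−r+1) + C(r+d−2, d) ≥ C(n+d−1, d) holds, with equality when r = n. (Here C(a,b) denotes the binomial coefficient.) In other words, the Singleton-like bound C(n+d−1,d) − C(r+d−2,d) for essential-rank-metric codes is never worse than the bound C(n+d−2,d−1)(n−r+1) inherited from rank-metric codes. -/
/-- Telescoping Pascal's rule `C(j+1, k+1) = C(j, k) + C(j, k+1)` from `j = a` to `j = a + m`
bounds the increase of `C(·, k+1)` by `m + 1` copies of the largest term `C(a + m, k)`. -/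
theorem Nat.choose_add_add_one_le (a m k : ℕ) :
    (a + m + 1).choose (k + 1) ≤ a.choose (k + 1) + (m + 1) * (a + m).choose k := by
  induction m with
  | zero => simp [Nat.choose_succ_succ', add_comm]
  | succ m ih =>
    have hmono : (a + m).choose k ≤ (a + m + 1).choose k := Nat.choose_le_succ _ _
    calc (a + (m + 1) + 1).choose (k + 1)
        = (a + m + 1).choose k + (a + m + 1).choose (k + 1) := Nat.choose_succ_succ' _ _
      _ ≤ (a + m + 1).choose k + (a.choose (k + 1) + (m + 1) * (a + m + 1).choose k) := by
          gcongr
          exact ih.trans (by gcongr)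
      _ = a.choose (k + 1) + (m + 1 + 1) * (a + (m + 1)).choose k := by ring_nf

theorem singleton_bound_comparison_general
    (n d r : ℕ) (hd : 2 ≤ d) (hrn : r ≤ n) :
    Nat.choose (n + d - 1) d ≤
      Nat.choose (n + d - 2) (d - 1) * (n - r + 1) + Nat.choose (r + d - 2) d ∧
    (r = n →
      Nat.choose (n + d - 2) (d - 1) * (n - r + 1) + Nat.choose (r + d - 2) d =
        Nat.choose (n + d - 1) d) := by
  obtain ⟨k, rfl⟩ : ∃ k, d = k + 2 := ⟨d - 2, by omega⟩
  obtain ⟨m, rfl⟩ : ∃ m, n = r + m := ⟨n - r, by omega⟩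
  simp only [show r + m - r + 1 = m + 1 by omega, show k + 2 - 1 = k + 1 by omega,
    show r + m + (k + 2) - 1 = r + k + m + 1 by omega, show r + m + (k + 2) - 2 = r + k + m by omega,
    show r + (k + 2) - 2 = r + k by omega]
  refine ⟨(Nat.choose_add_add_one_le (r + k) m (k + 1)).trans_eq (by ring), ?_⟩
  intro h
  obtain rfl : m = 0 := by omega
  simp [Nat.choose_succ_succ' (r + k) (k + 1)]

/-- For `d ≥ 2`, `n ≥ 1` and `1 ≤ r ≤ n` we have
`C(n+d-2, d-1)·(n-r+1) + C(r+d-2, d) ≥ C(n+d-1, d)`, with equality when `r = n`.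
That is, the Singleton-like bound for essential-rank-metric codes is never worse than the
bound inherited from rank-metric codes. -/
theorem singleton_bound_comparison
    (n d r : ℕ) (hd : 2 ≤ d) (hn : 1 ≤ n) (hr1 : 1 ≤ r) (hrn : r ≤ n) :
    Nat.choose (n + d - 1) d ≤
      Nat.choose (n + d - 2) (d - 1) * (n - r + 1) + Nat.choose (r + d - 2) d ∧
    (r = n →
      Nat.choose (n + d - 2) (d - 1) * (n - r + 1) + Nat.choose (r + d - 2) d =
        Nat.choose (n + d - 1) d) :=
  singleton_bound_comparison_general n d r hd hrn
end

section
/- Let F be a field with char(F) = 0 or char(F) > d, where d ≥ 2, and let C ⊆ S_{n,d}(F) be an F-linear subspace of dimension k such that every nonzero f ∈ C has ess(f) ≥ r. Then k ≤ C(n+d−2, d−1)·(n−r+1), where C(a,b) denotes the binomial coefficient. -/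
open MvPolynomial

section Aux

variable {F : Type*} [Field F] {n d : ℕ}

lemma degree_add' {σ : Type*} (a b : σ →₀ ℕ) :
    Finsupp.degree (a + b) = Finsupp.degree a + Finsupp.degree b := by
  simp [Finsupp.degree_eq_weight_one, map_add]

lemma degree_single_one {σ : Type*} (i : σ) :
    Finsupp.degree (Finsupp.single i 1) = 1 := by
  classical
  exact Finsupp.degree_single i 1

lemma pderiv_isHomogeneous {f : MvPolynomial (Fin n) F}
    (hf : f.IsHomogeneous d) (i : Fin n) : (pderiv i f).IsHomogeneous (d - 1) := by
  classical
  rw [f.as_sum, map_sum]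
  apply MvPolynomial.IsHomogeneous.sum
  intro s hs
  rw [pderiv_monomial]
  by_cases h : s i = 0
  · simp only [h, Nat.cast_zero, mul_zero, monomial_zero]
    exact isHomogeneous_zero _ _ _
  · apply isHomogeneous_monomial
    have hdeg : Finsupp.degree s = d := by
      have := hf (MvPolynomial.mem_support_iff.mp hs)
      rwa [Finsupp.degree_eq_weight_one]
    have hle : Finsupp.single i 1 ≤ s := Finsupp.single_le_iff.mpr (by omega)
    have hsum : (s - Finsupp.single i 1) + Finsupp.single i 1 = s := tsub_add_cancel_of_le hle
    have := congrArg Finsupp.degree hsum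
    rw [degree_add', degree_single_one] at this
    omega

lemma coeff_pderiv_sub (f : MvPolynomial (Fin n) F) (i : Fin n) (μ : Fin n →₀ ℕ)
    (hμ : μ i ≠ 0) :
    coeff (μ - Finsupp.single i 1) (pderiv i f) = coeff μ f * (μ i : F) := by
  classical
  conv_lhs => rw [f.as_sum, map_sum]
  simp_rw [pderiv_monomial]
  rw [coeff_sum, Finset.sum_eq_single μ]
  · rw [coeff_monomial, if_pos rfl]
  · intro s hs hne
    rw [coeff_monomial]
    split_ifs with h
    · by_cases h0 : s i = 0
      · simp [h0]
      · exfalso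
        apply hne
        have h1 : Finsupp.single i 1 ≤ s := Finsupp.single_le_iff.mpr (by omega)
        have h2 : Finsupp.single i 1 ≤ μ := Finsupp.single_le_iff.mpr (by omega)
        calc s = s - Finsupp.single i 1 + Finsupp.single i 1 := (tsub_add_cancel_of_le h1).symm
          _ = μ - Finsupp.single i 1 + Finsupp.single i 1 := by rw [h]
          _ = μ := tsub_add_cancel_of_le h2
    · rfl
  · intro hμs
    rw [coeff_monomial, if_pos rfl, MvPolynomial.notMem_support_iff.mp hμs, zero_mul]

lemma not_mem_vars_of_pderiv_eq_zero {f : MvPolynomial (Fin n) F}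
    (hf : f.IsHomogeneous d)
    (hchar : ringChar F = 0 ∨ d < ringChar F) {i : Fin n} (hp : pderiv i f = 0) :
    i ∉ f.vars := by
  intro hi
  obtain ⟨μ, hμsupp, hμi⟩ := (MvPolynomial.mem_vars i).mp hi
  have hμi' : μ i ≠ 0 := Finsupp.mem_support_iff.mp hμi
  have hz := coeff_pderiv_sub f i μ hμi'
  rw [hp, coeff_zero] at hz
  have hc : coeff μ f ≠ 0 := MvPolynomial.mem_support_iff.mp hμsupp
  have hcast : ((μ i : F)) = 0 := by
    rcases mul_eq_zero.mp hz.symm with h | h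
    · exact absurd h hc
    · exact h
  have hdvd : ringChar F ∣ μ i := (CharP.cast_eq_zero_iff F (ringChar F) (μ i)).mp hcast
  have hdeg : Finsupp.degree μ = d := by
    have := hf hc
    rwa [Finsupp.degree_eq_weight_one]
  have hle : μ i ≤ d := hdeg ▸ Finsupp.le_degree i μ
  rcases hchar with h0 | hlt
  · rw [h0, zero_dvd_iff] at hdvd
    exact hμi' hdvd
  · have := Nat.le_of_dvd (Nat.pos_of_ne_zero hμi') hdvd
    omega

lemma essRank_le_of_vars_subset {t : ℕ} {f : MvPolynomial (Fin n) F}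
    (hf : f.IsHomogeneous d) (emb : Fin t → Fin n) (hemb : Function.Injective emb)
    (hvars : ↑f.vars ⊆ Set.range emb) : essRank F n d f ≤ t := by
  obtain ⟨q, hq⟩ := MvPolynomial.exists_rename_eq_of_vars_subset_range f emb hemb hvars
  apply Nat.sInf_le
  refine ⟨fun j => X (emb j), fun j => isHomogeneous_X _ _, q, ?_, ?_⟩
  · rw [← MvPolynomial.IsHomogeneous.rename_isHomogeneous_iff hemb, hq]
    exact hf
  · rw [← hq, rename_eq_aeval]
    rfl

lemma one_le_essRank {f : MvPolynomial (Fin n) F} (hd : d ≠ 0)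
    (hf : f.IsHomogeneous d) (h0 : f ≠ 0) : 1 ≤ essRank F n d f := by
  by_contra h
  have hzero : essRank F n d f = 0 := by omega
  have hne : { r : ℕ | ∃ ℓ : Fin r → MvPolynomial (Fin n) F,
      (∀ i, (ℓ i).IsHomogeneous 1) ∧
      ∃ g : MvPolynomial (Fin r) F, g.IsHomogeneous d ∧ f = aeval ℓ g }.Nonempty :=
    ⟨n, X, fun i => isHomogeneous_X _ _, f, hf, by simp⟩
  have hmem := Nat.sInf_mem hne
  rw [show sInf _ = essRank F n d f from rfl, hzero] at hmem
  obtain ⟨ℓ, hℓ, g, hg, hfg⟩ := hmem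
  have hgz : g = 0 := by
    ext μ
    have hμ : μ = 0 := Subsingleton.elim _ _
    rw [coeff_zero]
    apply hg.coeff_eq_zero
    rw [hμ, map_zero]
    omega
  rw [hgz, map_zero] at hfg
  exact h0 hfg

/-- The set of monomial exponents in `Fin n` of total degree `e` is equivalent to
multisets of size `e` over `Fin n`. -/
noncomputable def degreeEquivSym (n e : ℕ) :
    {μ : Fin n →₀ ℕ // Finsupp.degree μ = e} ≃ Sym (Fin n) e where
  toFun μ := ⟨Finsupp.toMultiset μ.1, by
    rw [Finsupp.card_toMultiset]
    exact μ.2⟩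
  invFun s := ⟨Multiset.toFinsupp s.1, by
    have : Multiset.card (Finsupp.toMultiset (Multiset.toFinsupp s.1)) = e := by
      rw [Multiset.toFinsupp_toMultiset]
      exact s.2
    rw [Finsupp.card_toMultiset] at this
    exact this⟩
  left_inv μ := Subtype.ext (Finsupp.toMultiset_toFinsupp μ.1)
  right_inv s := Subtype.ext (Multiset.toFinsupp_toMultiset s.1)

end Aux

/-- **Bound inherited from rank-metric codes.**  Suppose `char F = 0` or `char F > d ≥ 2`.
If `C ⊆ S_{n,d}(F)` is a `k`-dimensional subspace in which every nonzero element has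
essential rank at least `r`, then `k ≤ C(n+d-2, d-1)·(n-r+1)`. -/
theorem essential_rank_code_rank_metric_bound
    {F : Type*} [Field F] {n d r k : ℕ} (hd : 2 ≤ d)
    (hchar : ringChar F = 0 ∨ d < ringChar F)
    (C : Submodule F (MvPolynomial (Fin n) F))
    (hC : C ≤ homogeneousSubmodule (Fin n) F d)
    (hk : Module.finrank F C = k)
    (hmin : ∀ f ∈ C, f ≠ 0 → r ≤ essRank F n d f) :
    k ≤ Nat.choose (n + d - 2) (d - 1) * (n - r + 1) := by
  classical
  rcases Nat.eq_zero_or_pos n with hn | hn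
  · subst hn
    have hbot : C = ⊥ := by
      rw [Submodule.eq_bot_iff]
      intro f hf
      ext μ
      rw [coeff_zero]
      apply (hC hf).coeff_eq_zero
      have : μ = 0 := Subsingleton.elim _ _
      rw [this, map_zero]
      omega
    rw [hbot, finrank_bot] at hk
    omega
  -- main case : n ≥ 1
  set r' := max r 1 with hr'
  set m := n - r' + 1 with hm
  have hm1 : 1 ≤ m := by omega
  have hmn : m ≤ n := by omega
  have hmin' : ∀ f ∈ C, f ≠ 0 → r' ≤ essRank F n d f := by
    intro f hf h0
    exact max_le (hmin f hf h0) (one_le_essRank (by omega) (hC hf) h0)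
  set T := {μ : Fin n →₀ ℕ // Finsupp.degree μ = d - 1} with hT
  letI : Fintype T := Fintype.ofEquiv _ (degreeEquivSym n (d - 1)).symm
  -- the injective linear map
  let Ψ : C →ₗ[F] ((Fin m × T) → F) :=
    { toFun := fun f p => coeff p.2.1 (pderiv (Fin.castLE hmn p.1) (f : MvPolynomial (Fin n) F))
      map_add' := by
        intro f g
        funext p
        simp [coeff_add]
      map_smul' := by
        intro c f
        funext p
        simp [coeff_smul] }
  have hΨ : Function.Injective Ψ := by
    rw [← LinearMap.ker_eq_bot, Submodule.eq_bot_iff]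
    intro f hf
    have hf0 : ∀ p : Fin m × T,
        coeff p.2.1 (pderiv (Fin.castLE hmn p.1) (f : MvPolynomial (Fin n) F)) = 0 := by
      intro p
      have := congrFun (LinearMap.mem_ker.mp hf) p
      exact this
    by_contra h0
    have h0' : (f : MvPolynomial (Fin n) F) ≠ 0 := by
      simpa [Submodule.coe_eq_zero] using h0
    have hhom : (f : MvPolynomial (Fin n) F).IsHomogeneous d := hC f.2
    -- all partials in direction i < m vanish
    have hpz : ∀ i : Fin m, pderiv (Fin.castLE hmn i) (f : MvPolynomial (Fin n) F) = 0 := by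
      intro i
      ext μ
      rw [coeff_zero]
      by_cases hμ : Finsupp.degree μ = d - 1
      · exact hf0 (i, ⟨μ, hμ⟩)
      · exact (pderiv_isHomogeneous hhom _).coeff_eq_zero hμ
    -- hence the variables of f live among the last n - m coordinates
    have hvars : ↑(f : MvPolynomial (Fin n) F).vars ⊆
        Set.range (fun j : Fin (n - m) => (⟨m + j.1, by omega⟩ : Fin n)) := by
      intro i hi
      have him : m ≤ i.1 := by
        by_contra hlt
        exact not_mem_vars_of_pderiv_eq_zero hhom hchar
          (hpz ⟨i.1, by omega⟩) (by simpa using hi)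
      exact ⟨⟨i.1 - m, by omega⟩, by
        apply Fin.ext
        simp
        omega⟩
    have hinj : Function.Injective (fun j : Fin (n - m) => (⟨m + j.1, by omega⟩ : Fin n)) := by
      intro a b hab
      have : m + a.1 = m + b.1 := congrArg Fin.val hab
      exact Fin.ext (by omega)
    have hle := essRank_le_of_vars_subset hhom _ hinj hvars
    have hge := hmin' f f.2 h0'
    omega
  -- dimension count
  have hfin : Module.finrank F C ≤ Fintype.card (Fin m × T) := by
    have := LinearMap.finrank_le_finrank_of_injective hΨ
    rwa [Module.finrank_fintype_fun_eq_card] at this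
  have hcardT : Fintype.card T = Nat.choose (n + d - 2) (d - 1) := by
    rw [Fintype.card_congr (degreeEquivSym n (d - 1)), Sym.card_sym_fin_eq_multichoose,
      Nat.multichoose_eq]
    congr 1
    omega
  rw [Fintype.card_prod, Fintype.card_fin, hcardT, hk] at hfin
  calc k ≤ m * Nat.choose (n + d - 2) (d - 1) := hfin
    _ ≤ Nat.choose (n + d - 2) (d - 1) * (n - r + 1) := by
        rw [mul_comm]
        exact Nat.mul_le_mul_left _ (by omega)
end

section
/- Let F be an algebraically closed field and let f ∈ S_{n,d}(F) be a nonzero homogeneous polynomial of degree d such that the only common zero in F^n of all partial derivatives ∂_1 f, …, ∂_n f is the origin. Then str(f) ≥ n/2. Equivalently: if f = g_1h_1 + … + g_rh_r with each g_i, h_i ∈ S_n(F) homogeneous of degree strictly between 0 and d and 2r < n, then the polynomials ∂_1 f, …, ∂_n f have a common zero a ∈ F^n with a ≠ 0. -/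
open MvPolynomial

/-- The strength of `f`: the least `r` such that `f = g₁h₁ + … + g_rh_r` with
`deg gᵢ, deg hᵢ < d` (`⊤` if no such decomposition exists). -/
noncomputable def strength (F : Type*) [Field F] (n d : ℕ) (f : MvPolynomial (Fin n) F) :
    ℕ∞ :=
  sInf { N : ℕ∞ | ∃ r : ℕ, N = (r : ℕ∞) ∧ ∃ g h : Fin r → MvPolynomial (Fin n) F,
    (∀ i, (g i).totalDegree < d) ∧ (∀ i, (h i).totalDegree < d) ∧ f = ∑ i, g i * h i }

namespace StrengthLowerBoundAux

open Finset

variable {F : Type*} [Field F] {n : ℕ}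

private lemma deg_add (a b : Fin n →₀ ℕ) : (a + b).degree = a.degree + b.degree := by
  simp only [Finsupp.degree_eq_weight_one, map_add]

private lemma deg_single (j : Fin n) (k : ℕ) : (Finsupp.single j k).degree = k := by
  classical
  rcases Nat.eq_zero_or_pos k with hk | hk
  · simp [hk, Finsupp.degree]
  · exact Finsupp.degree_single j k

private lemma sum_id_eq_degree (s : Fin n →₀ ℕ) : (s.sum fun _ ↦ id) = s.degree := rfl

private lemma sum_eq_degree (s : Fin n →₀ ℕ) : (s.sum fun _ e ↦ e) = s.degree := rfl

private lemma totalDegree_pderiv_le (p : MvPolynomial (Fin n) F) (j : Fin n) (c : ℕ)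
    (hp : p.totalDegree ≤ c + 1) : (pderiv j p).totalDegree ≤ c := by
  classical
  have hrw : pderiv j p = ∑ v ∈ p.support, pderiv j (monomial v (coeff v p)) := by
    rw [← map_sum, ← p.as_sum]
  rw [hrw]
  refine totalDegree_finsetSum_le fun v hv => ?_
  rw [pderiv_monomial]
  rcases Nat.eq_zero_or_pos (v j) with hvj | hvj
  · simp [hvj]
  · refine (totalDegree_monomial_le _ _).trans ?_
    have hle : Finsupp.single j 1 ≤ v := by
      rw [Finsupp.single_le_iff]; exact hvj
    have hadd : (v - Finsupp.single j 1) + Finsupp.single j 1 = v :=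
      tsub_add_cancel_of_le hle
    have hdeg : (v - Finsupp.single j 1).degree + 1 = v.degree := by
      conv_rhs => rw [← hadd]
      rw [deg_add, deg_single]
    have hv' : v.degree ≤ c + 1 := by
      have := le_totalDegree hv
      rw [sum_eq_degree] at this
      omega
    have hs : ((v - Finsupp.single j 1).sum fun _ ↦ id) = (v - Finsupp.single j 1).degree :=
      sum_id_eq_degree _
    omega

private lemma isHomogeneous_pderiv {d : ℕ} {f : MvPolynomial (Fin n) F}
    (hf : f.IsHomogeneous (d + 1)) (j : Fin n) : (pderiv j f).IsHomogeneous d := by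
  classical
  have hrw : pderiv j f = ∑ v ∈ f.support, pderiv j (monomial v (coeff v f)) := by
    rw [← map_sum, ← f.as_sum]
  rw [hrw]
  refine IsHomogeneous.sum _ _ _ fun v hv => ?_
  rw [pderiv_monomial]
  rcases Nat.eq_zero_or_pos (v j) with hvj | hvj
  · simp only [hvj, Nat.cast_zero, mul_zero, map_zero]
    exact isHomogeneous_zero _ _ _
  · refine isHomogeneous_monomial _ ?_
    have hle : Finsupp.single j 1 ≤ v := by
      rw [Finsupp.single_le_iff]; exact hvj
    have hadd : (v - Finsupp.single j 1) + Finsupp.single j 1 = v :=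
      tsub_add_cancel_of_le hle
    have hdeg : (v - Finsupp.single j 1).degree + 1 = v.degree := by
      conv_rhs => rw [← hadd]
      rw [deg_add, deg_single]
    have hvd : v.degree = d + 1 := by
      have := hf (mem_support_iff.mp hv)
      rwa [Finsupp.degree_eq_weight_one]
    omega

/-- extracting a homogeneous certificate -/
private lemma homogComp_mul_homogeneous (c p : MvPolynomial (Fin n) F) {D N : ℕ}
    (hp : p.IsHomogeneous D) (hDN : D ≤ N) :
    homogeneousComponent N (c * p) = homogeneousComponent (N - D) c * p := by
  classical
  conv_lhs => rw [← sum_homogeneousComponent c, sum_mul, map_sum]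
  have hterm : ∀ k, homogeneousComponent N (homogeneousComponent k c * p)
      = if k = N - D then homogeneousComponent k c * p else 0 := by
    intro k
    have hhom : (homogeneousComponent k c * p).IsHomogeneous (k + D) :=
      (homogeneousComponent_isHomogeneous k c).mul hp
    rw [homogeneousComponent_of_mem ((mem_homogeneousSubmodule _ _).mpr hhom)]
    by_cases hk : k = N - D
    · rw [if_pos (by omega), if_pos hk]
    · rw [if_neg (by omega), if_neg hk]
  calc (∑ k ∈ Finset.range (c.totalDegree + 1),
          homogeneousComponent N (homogeneousComponent k c * p))
      = ∑ k ∈ Finset.range (c.totalDegree + 1),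
          (if k = N - D then homogeneousComponent k c * p else 0) :=
        Finset.sum_congr rfl fun k _ => hterm k
    _ = homogeneousComponent (N - D) c * p := by
        rw [Finset.sum_ite_eq' (Finset.range (c.totalDegree + 1))]
        by_cases hmem : N - D ∈ Finset.range (c.totalDegree + 1)
        · rw [if_pos hmem]
        · rw [if_neg hmem]
          have : c.totalDegree < N - D := by
            simp only [Finset.mem_range, Nat.lt_succ_iff, not_le] at hmem
            omega
          rw [homogeneousComponent_eq_zero _ _ this, zero_mul]

end StrengthLowerBoundAux

section KeyLemma

open Finset StrengthLowerBoundAux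

/-- The key lemma: if a degree-`d` homogeneous `f` equals `∑ᵢ gᵢ hᵢ` with all factors of
total degree `< d` and `2r < n`, then the partial derivatives of `f` have a nontrivial
common zero. -/
theorem key_lemma {F : Type*} [Field F] [IsAlgClosed F] {n d r : ℕ}
    (f : MvPolynomial (Fin n) F) (hf : f.IsHomogeneous d)
    (g h : Fin r → MvPolynomial (Fin n) F)
    (hg : ∀ i, (g i).totalDegree < d) (hh : ∀ i, (h i).totalDegree < d)
    (hsum : f = ∑ i, g i * h i) (hrn : 2 * r < n) :
    ∃ a : Fin n → F, a ≠ 0 ∧ ∀ j, eval a (pderiv j f) = 0 := by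
  classical
  by_contra hcon
  push_neg at hcon
  have hzero : ∀ a : Fin n → F, (∀ j, eval a (pderiv j f) = 0) → a = 0 := by
    intro a ha
    by_contra h0
    obtain ⟨j, hj⟩ := hcon a h0
    exact hj (ha j)
  have hn1 : 0 < n := by omega
  -- a nonzero point
  have hone : (fun _ : Fin n => (1 : F)) ≠ 0 := by
    intro hfun
    have := congrFun hfun ⟨0, hn1⟩
    simp at this
  -- dispose of tiny degrees
  rcases Nat.lt_or_ge d 2 with hd2 | hd2
  · -- d = 0 or d = 1 : then f = 0
    have hf0 : f = 0 := by
      rcases Nat.eq_zero_or_pos r with hr0 | hrpos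
      · subst hr0; simpa using hsum
      · interval_cases d
        · exact absurd (hg ⟨0, hrpos⟩) (by omega)
        · -- d = 1 : all g i, h i are constants, so f has totalDegree 0;
          by_contra hfne
          have h1 : f.totalDegree = 1 := hf.totalDegree hfne
          have h0 : f.totalDegree ≤ 0 := by
            rw [hsum]
            refine totalDegree_finsetSum_le fun i _ => ?_
            have := totalDegree_mul (g i) (h i)
            have hgi := hg i
            have hhi := hh i
            omega
          omega
    have : (fun _ : Fin n => (1 : F)) = 0 := by
      refine hzero _ fun j => ?_
      rw [hf0]
      simp
    exact hone this
  -- main case : d ≥ 2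
  set D : ℕ := d - 1 with hD
  have hD1 : 1 ≤ D := by omega
  have hdD : d = D + 1 := by omega
  have hfD : f.IsHomogeneous (D + 1) := by rwa [← hdD]
  have hpdhom : ∀ j, (pderiv j f).IsHomogeneous D := fun j => isHomogeneous_pderiv hfD j
  set J : Ideal (MvPolynomial (Fin n) F) :=
    Ideal.span (Set.range fun j : Fin n => pderiv j f) with hJ
  -- Nullstellensatz : each X i is in the radical of J
  have hXrad : ∀ i : Fin n, (X i : MvPolynomial (Fin n) F) ∈ J.radical := by
    intro i
    rw [← vanishingIdeal_zeroLocus_eq_radical (K := F), mem_vanishingIdeal_iff]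
    intro x hx
    have hx0 : x = 0 := by
      refine hzero x fun j => ?_
      exact hx _ (Ideal.subset_span ⟨j, rfl⟩)
    rw [hx0]
    simp
  choose N0 hN0 using fun i => (Ideal.mem_radical_iff.mp (hXrad i))
  set N : ℕ := (Finset.univ.sup N0) + D + 1 with hNdef
  have hND : D + 1 ≤ N := by omega
  have hXN : ∀ i : Fin n, (X i : MvPolynomial (Fin n) F) ^ N ∈ J := by
    intro i
    have hle : N0 i ≤ N := by
      have := Finset.le_sup (f := N0) (Finset.mem_univ i)
      omega
    have : (X i : MvPolynomial (Fin n) F) ^ N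
        = X i ^ (N - N0 i) * X i ^ (N0 i) := by
      rw [← pow_add]
      congr 1
      omega
    rw [this]
    exact Ideal.mul_mem_left _ _ (hN0 i)
  -- homogeneous certificates
  have hcert0 : ∀ i : Fin n, ∃ q : Fin n → MvPolynomial (Fin n) F,
      ((∀ j, (q j).IsHomogeneous (N - D)) ∧
        (X i : MvPolynomial (Fin n) F) ^ N = ∑ j, q j * pderiv j f) := by
    intro i
    obtain ⟨c, hc⟩ := Ideal.mem_span_range_iff_exists_fun.mp (hXN i)
    refine ⟨fun j => homogeneousComponent (N - D) (c j), fun j =>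
      homogeneousComponent_isHomogeneous _ _, ?_⟩
    have hXhom : ((X i : MvPolynomial (Fin n) F) ^ N).IsHomogeneous N := by
      simpa only [one_mul] using (isHomogeneous_X F i).pow N
    have := congrArg (homogeneousComponent N) hc
    rw [map_sum] at this
    calc (X i : MvPolynomial (Fin n) F) ^ N
        = homogeneousComponent N ((X i : MvPolynomial (Fin n) F) ^ N) := by
          rw [homogeneousComponent_of_mem ((mem_homogeneousSubmodule _ _).mpr hXhom),
            if_pos rfl]
      _ = ∑ j, homogeneousComponent N (c j * pderiv j f) := this.symm ▸ rfl
      _ = ∑ j, homogeneousComponent (N - D) (c j) * pderiv j f :=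
          Finset.sum_congr rfl fun j _ =>
            homogComp_mul_homogeneous (c j) (pderiv j f) (hpdhom j) (by omega)
  choose q hqhom hq using hcert0
  -- the 2r polynomials
  set P : Fin r × Bool → MvPolynomial (Fin n) F :=
    fun l => if l.2 then g l.1 else h l.1 with hP
  set R : Fin n → Fin r × Bool → MvPolynomial (Fin n) F :=
    fun i l => if l.2 then ∑ j, q i j * pderiv j (h l.1)
      else ∑ j, q i j * pderiv j (g l.1) with hR
  have hpd : ∀ j, pderiv j f
      = ∑ i', (pderiv j (g i') * h i' + g i' * pderiv j (h i')) := by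
    intro j
    rw [hsum, map_sum]
    exact Finset.sum_congr rfl fun i' _ => pderiv_mul
  have hcert : ∀ i : Fin n, (X i : MvPolynomial (Fin n) F) ^ N = ∑ l, R i l * P l := by
    intro i
    calc (X i : MvPolynomial (Fin n) F) ^ N = ∑ j, q i j * pderiv j f := hq i
      _ = ∑ j, ∑ i', (q i j * pderiv j (g i') * h i'
            + q i j * (g i' * pderiv j (h i'))) := by
          refine Finset.sum_congr rfl fun j _ => ?_
          rw [hpd j, Finset.mul_sum]
          exact Finset.sum_congr rfl fun i' _ => by ring
      _ = ∑ i', ((∑ j, q i j * pderiv j (g i')) * h i'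
            + (∑ j, q i j * pderiv j (h i')) * g i') := by
          rw [Finset.sum_comm]
          refine Finset.sum_congr rfl fun i' _ => ?_
          rw [Finset.sum_add_distrib, Finset.sum_mul, Finset.sum_mul]
          congr 1
          exact Finset.sum_congr rfl fun j _ => by ring
      _ = ∑ l, R i l * P l := by
          rw [Fintype.sum_prod_type]
          refine Finset.sum_congr rfl fun i' _ => ?_
          rw [Fintype.sum_bool]
          simp only [hR, hP]
          norm_num
          ring
  -- degree bound on the certificates
  have hRdeg : ∀ i l, (R i l).totalDegree + 1 ≤ N := by
    intro i l
    have hbound : ∀ p : MvPolynomial (Fin n) F, p.totalDegree < d →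
        (∑ j, q i j * pderiv j p).totalDegree + 1 ≤ N := by
      intro p hpd'
      have : (∑ j, q i j * pderiv j p).totalDegree ≤ (N - D) + (D - 1) := by
        refine totalDegree_finsetSum_le fun j _ => ?_
        refine (totalDegree_mul _ _).trans ?_
        have h1 : (q i j).totalDegree ≤ N - D := (hqhom i j).totalDegree_le
        have h2 : (pderiv j p).totalDegree ≤ D - 1 := by
          refine totalDegree_pderiv_le p j (D - 1) ?_
          omega
        omega
      omega
    rcases l with ⟨i', b⟩
    cases b
    · simpa only [hR, Bool.false_eq_true, if_false] using hbound (g i') (hg i')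
    · simpa only [hR, if_true] using hbound (h i') (hh i')
  -- the span sets
  set K : ℕ := n * (N - 1) with hK
  set Φ : ℕ → Set (MvPolynomial (Fin n) F) := fun δ =>
    { x | ∃ (σf : Fin r × Bool → ℕ) (s : Fin n →₀ ℕ),
        (∑ l, σf l) ≤ δ ∧ s.degree ≤ K ∧ x = (∏ l, P l ^ σf l) * monomial s 1 } with hΦ
  set W : ℕ → Submodule F (MvPolynomial (Fin n) F) := fun δ => Submodule.span F (Φ δ) with hW
  have hWmono : ∀ {δ δ'}, δ ≤ δ' → W δ ≤ W δ' := by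
    intro δ δ' hδ
    refine Submodule.span_mono ?_
    rintro x ⟨σf, s, h1, h2, h3⟩
    exact ⟨σf, s, le_trans h1 hδ, h2, h3⟩
  -- multiplication by P l maps W δ to W (δ+1)
  have hmulP : ∀ (δ : ℕ) (l : Fin r × Bool) (x : MvPolynomial (Fin n) F),
      x ∈ W δ → P l * x ∈ W (δ + 1) := by
    intro δ l x hx
    refine Submodule.span_induction ?_ ?_ ?_ ?_ hx
    · rintro y ⟨σf, s, h1, h2, rfl⟩
      refine Submodule.subset_span ?_
      refine ⟨Function.update σf l (σf l + 1), s, ?_, h2, ?_⟩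
      · rw [Finset.sum_update_of_mem (Finset.mem_univ l)]
        have : ∑ x ∈ Finset.univ \ {l}, σf x ≤ ∑ x, σf x := by
          refine Finset.sum_le_sum_of_subset ?_
          exact Finset.sdiff_subset
        have hsl : σf l ≤ ∑ x, σf x := Finset.single_le_sum (fun _ _ => Nat.zero_le _)
          (Finset.mem_univ l)
        have hsplit : σf l + ∑ x ∈ Finset.univ \ {l}, σf x = ∑ x, σf x := by
          rw [Finset.sum_eq_sum_sdiff_singleton_add (Finset.mem_univ l) σf]
          ring
        omega
      · have h1 : ∀ τ : Fin r × Bool → ℕ, (∏ x, P x ^ τ x)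
            = P l ^ τ l * ∏ x ∈ Finset.univ.erase l, P x ^ τ x := fun τ =>
          (Finset.mul_prod_erase Finset.univ (fun x => P x ^ τ x) (Finset.mem_univ l)).symm
        rw [h1 (Function.update σf l (σf l + 1)), h1 σf, Function.update_self]
        have h2 : ∏ x ∈ Finset.univ.erase l, P x ^ (Function.update σf l (σf l + 1)) x
            = ∏ x ∈ Finset.univ.erase l, P x ^ σf x :=
          Finset.prod_congr rfl fun x hx => by
            rw [Function.update_of_ne (Finset.ne_of_mem_erase hx)]
        rw [h2, pow_succ]
        ring
    · rw [mul_zero]; exact Submodule.zero_mem _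
    · intro y z _ _ hy hz
      rw [mul_add]; exact Submodule.add_mem _ hy hz
    · intro a y _ hy
      rw [mul_smul_comm]; exact Submodule.smul_mem _ a hy
  -- the span claim
  have hspan : ∀ δ : ℕ, ∀ s : Fin n →₀ ℕ, s.degree ≤ δ →
      (monomial s 1 : MvPolynomial (Fin n) F) ∈ W δ := by
    intro δ
    induction δ using Nat.strong_induction_on with
    | _ δ IH =>
      intro s hs
      by_cases hsK : s.degree ≤ K
      · refine Submodule.subset_span ⟨fun _ => 0, s, by simp, hsK, ?_⟩
        simp
      · push_neg at hsK
        -- pigeonhole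
        have hex : ∃ i, N ≤ s i := by
          by_contra hall
          push_neg at hall
          have : s.degree ≤ K := by
            have h1 : s.degree = ∑ i ∈ s.support, s i := rfl
            have h2 : ∑ i ∈ s.support, s i ≤ ∑ i : Fin n, s i :=
              Finset.sum_le_sum_of_subset (Finset.subset_univ _)
            have h3 : ∑ i : Fin n, s i ≤ n * (N - 1) := by
              calc ∑ i : Fin n, s i ≤ ∑ _i : Fin n, (N - 1) :=
                    Finset.sum_le_sum fun i _ => by have := hall i; omega
                _ = n * (N - 1) := by
                    rw [Finset.sum_const, Finset.card_univ, Fintype.card_fin, smul_eq_mul]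
            rw [hK]
            omega
          exact absurd this (by omega)
        obtain ⟨i, hNi⟩ := hex
        set s' : Fin n →₀ ℕ := s - Finsupp.single i N with hs'
        have hle : Finsupp.single i N ≤ s := by
          rw [Finsupp.single_le_iff]; exact hNi
        have hadd : Finsupp.single i N + s' = s := by
          rw [hs', add_comm]
          exact tsub_add_cancel_of_le hle
        have hdegsplit : N + s'.degree = s.degree := by
          conv_rhs => rw [← hadd]
          rw [StrengthLowerBoundAux.deg_add, StrengthLowerBoundAux.deg_single]
        have hmono : (monomial s 1 : MvPolynomial (Fin n) F)
            = (X i ^ N) * monomial s' 1 := by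
          rw [X_pow_eq_monomial, monomial_mul, one_mul, hadd]
        rw [hmono, hcert i, Finset.sum_mul]
        refine Submodule.sum_mem _ fun l _ => ?_
        -- R i l * P l * monomial s' 1  =  (R i l * monomial s' 1) * P l
        have hassoc : R i l * P l * monomial s' 1
            = (R i l * monomial s' 1) * P l := by ring
        rw [hassoc]
        set T : MvPolynomial (Fin n) F := R i l * monomial s' 1 with hT
        have hTdeg : T.totalDegree + 1 ≤ s.degree := by
          have h1 : T.totalDegree ≤ (R i l).totalDegree + s'.degree := by
            refine (totalDegree_mul _ _).trans ?_
            have : (monomial s' (1 : F)).totalDegree ≤ s'.degree :=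
              totalDegree_monomial_le _ _
            omega
          have h2 := hRdeg i l
          omega
        have hexp : T * P l = ∑ v ∈ T.support, monomial v (coeff v T) * P l := by
          conv_lhs => rw [T.as_sum]
          rw [Finset.sum_mul]
        rw [hexp]
        refine Submodule.sum_mem _ fun v hv => ?_
        have hvdeg : v.degree + 1 ≤ s.degree := by
          have h3 : (v.sum fun _ e => e) ≤ T.totalDegree := le_totalDegree hv
          rw [StrengthLowerBoundAux.sum_eq_degree] at h3
          omega
        have hmem : (monomial v 1 : MvPolynomial (Fin n) F) ∈ W (δ - 1) := by
          refine IH (δ - 1) (by omega) v (by omega)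
        have : P l * monomial v 1 ∈ W (δ - 1 + 1) := hmulP _ l _ hmem
        have hδeq : δ - 1 + 1 = δ := by omega
        rw [hδeq] at this
        have hsm : (monomial v (coeff v T) : MvPolynomial (Fin n) F) * P l
            = coeff v T • (P l * monomial v 1) := by
          have hm1 : (monomial v (coeff v T) : MvPolynomial (Fin n) F)
              = coeff v T • monomial v 1 := by
            rw [smul_monomial, smul_eq_mul, mul_one]
          rw [hm1, smul_mul_assoc, mul_comm (monomial v (1 : F)) (P l)]
        rw [hsm]
        exact Submodule.smul_mem _ _ this
  -- counting : compare a big linearly independent family of monomials with the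
  -- finite spanning family of `W (n*C)` where `C` is chosen large enough.
  set C : ℕ := n ^ (2 * r) * (K + 1) ^ n with hC
  have hC1 : 1 ≤ C := by
    have h1 : 1 ≤ n ^ (2 * r) := Nat.one_le_pow _ _ hn1
    have h2 : 1 ≤ (K + 1) ^ n := Nat.one_le_pow _ _ (by omega)
    calc 1 = 1 * 1 := by ring
      _ ≤ n ^ (2 * r) * (K + 1) ^ n := Nat.mul_le_mul h1 h2
  -- the finite spanning family
  set φfam : ((Fin r × Bool) → Fin (n * C + 1)) × (Fin n → Fin (K + 1)) →
      MvPolynomial (Fin n) F := fun z =>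
    (∏ l, P l ^ (z.1 l : ℕ)) *
      monomial (Finsupp.equivFunOnFinite.symm fun i => ((z.2 i : ℕ))) 1 with hφfam
  have hΦsub : Φ (n * C) ⊆ Set.range φfam := by
    rintro x ⟨σf, s, h1, h2, rfl⟩
    have hσ : ∀ l, σf l < n * C + 1 := by
      intro l
      have : σf l ≤ ∑ l', σf l' := Finset.single_le_sum (fun _ _ => Nat.zero_le _)
        (Finset.mem_univ l)
      omega
    have hsb : ∀ i, s i < K + 1 := by
      intro i
      have := Finsupp.le_degree i s
      omega
    refine ⟨⟨fun l => ⟨σf l, hσ l⟩, fun i => ⟨s i, hsb i⟩⟩, ?_⟩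
    simp only [hφfam]
    congr 1
    congr 1
    have : (Finsupp.equivFunOnFinite.symm fun i => s i) = s := by
      ext i
      simp [Finsupp.equivFunOnFinite]
    rw [this]
  set V : Submodule F (MvPolynomial (Fin n) F) := Submodule.span F (Set.range φfam) with hV
  have hWV : W (n * C) ≤ V := by
    rw [hW, hV]
    exact Submodule.span_mono hΦsub
  have : FiniteDimensional F V := FiniteDimensional.span_of_finite F (Set.finite_range φfam)
  have hrank : Module.finrank F V
      ≤ Fintype.card (((Fin r × Bool) → Fin (n * C + 1)) × (Fin n → Fin (K + 1))) :=
    finrank_range_le_card φfam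
  -- the linearly independent family of monomials
  set ψ : (Fin n → Fin (C + 1)) → MvPolynomial (Fin n) F := fun c =>
    monomial (Finsupp.equivFunOnFinite.symm fun i => ((c i : ℕ))) 1 with hψ
  have hψmem : ∀ c, ψ c ∈ V := by
    intro c
    refine hWV ?_
    refine hspan (n * C) _ ?_
    have h1 : (Finsupp.equivFunOnFinite.symm fun i => ((c i : ℕ))).degree
        ≤ ∑ i : Fin n, (c i : ℕ) := by
      rw [Finsupp.degree]
      exact Finset.sum_le_sum_of_subset (Finset.subset_univ _)
    have h2 : ∑ i : Fin n, (c i : ℕ) ≤ ∑ _i : Fin n, C :=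
      Finset.sum_le_sum fun i _ => Nat.lt_succ_iff.mp (c i).2
    have h3 : ∑ _i : Fin n, C = n * C := by
      rw [Finset.sum_const, Finset.card_univ, Fintype.card_fin, smul_eq_mul]
    omega
  have hψli : LinearIndependent F ψ := by
    have hinj : Function.Injective
        (fun c : Fin n → Fin (C + 1) =>
          (Finsupp.equivFunOnFinite.symm fun i => ((c i : ℕ)) : Fin n →₀ ℕ)) := by
      intro c c' hcc
      have := congrArg Finsupp.equivFunOnFinite hcc
      simp only [Equiv.apply_symm_apply] at this
      funext i
      have := congrFun this i
      exact Fin.ext this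
    have hb := (MvPolynomial.basisMonomials (Fin n) F).linearIndependent
    have : ψ = (MvPolynomial.basisMonomials (Fin n) F)
        ∘ (fun c : Fin n → Fin (C + 1) =>
            (Finsupp.equivFunOnFinite.symm fun i => ((c i : ℕ)) : Fin n →₀ ℕ)) := by
      funext c
      simp [hψ, MvPolynomial.coe_basisMonomials]
    rw [this]
    exact hb.comp _ hinj
  -- transfer to V
  set ψ' : (Fin n → Fin (C + 1)) → V := fun c => ⟨ψ c, hψmem c⟩ with hψ'
  have hψ'li : LinearIndependent F ψ' := by
    have hcomp : (V.subtype) ∘ ψ' = ψ := rfl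
    exact LinearIndependent.of_comp V.subtype (hcomp.symm ▸ hψli)
  have hcard : Fintype.card (Fin n → Fin (C + 1)) ≤ Module.finrank F V :=
    hψ'li.fintype_card_le_finrank
  -- numerics
  have hcard1 : Fintype.card (Fin n → Fin (C + 1)) = (C + 1) ^ n := by
    rw [Fintype.card_fun, Fintype.card_fin, Fintype.card_fin]
  have hcard2 : Fintype.card (((Fin r × Bool) → Fin (n * C + 1)) × (Fin n → Fin (K + 1)))
      = (n * C + 1) ^ (2 * r) * (K + 1) ^ n := by
    rw [Fintype.card_prod, Fintype.card_fun, Fintype.card_fun, Fintype.card_fin,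
      Fintype.card_fin, Fintype.card_fin, Fintype.card_prod, Fintype.card_fin,
      Fintype.card_bool]
    ring_nf
  have hmain : (C + 1) ^ n ≤ (n * C + 1) ^ (2 * r) * (K + 1) ^ n := by
    rw [← hcard1, ← hcard2]
    exact le_trans hcard hrank
  -- final contradiction
  have hm1 : n * C + 1 ≤ n * (C + 1) := by
    have : n * (C + 1) = n * C + n := by ring
    omega
  have h5 : (n * C + 1) ^ (2 * r) ≤ n ^ (2 * r) * (C + 1) ^ (2 * r) := by
    calc (n * C + 1) ^ (2 * r) ≤ (n * (C + 1)) ^ (2 * r) := Nat.pow_le_pow_left hm1 _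
      _ = n ^ (2 * r) * (C + 1) ^ (2 * r) := by rw [mul_pow]
  have h7 : (C + 1) ^ (2 * r) ≤ (C + 1) ^ (n - 1) :=
    Nat.pow_le_pow_right (by omega) (by omega)
  have h8 : (C + 1) ^ n ≤ C * (C + 1) ^ (n - 1) := by
    calc (C + 1) ^ n ≤ (n * C + 1) ^ (2 * r) * (K + 1) ^ n := hmain
      _ ≤ (n ^ (2 * r) * (C + 1) ^ (2 * r)) * (K + 1) ^ n :=
          Nat.mul_le_mul_right _ h5
      _ ≤ (n ^ (2 * r) * (C + 1) ^ (n - 1)) * (K + 1) ^ n :=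
          Nat.mul_le_mul_right _ (Nat.mul_le_mul_left _ h7)
      _ = (n ^ (2 * r) * (K + 1) ^ n) * (C + 1) ^ (n - 1) := by ring
      _ = C * (C + 1) ^ (n - 1) := by rw [← hC]
  have h9 : (C + 1) ^ n = (C + 1) * (C + 1) ^ (n - 1) := by
    conv_lhs => rw [show n = (n - 1) + 1 by omega]
    rw [pow_succ]
    ring
  have hA : 0 < (C + 1) ^ (n - 1) := Nat.pow_pos (by omega)
  have h10 : C + 1 ≤ C := by
    refine Nat.le_of_mul_le_mul_right ?_ hA
    calc (C + 1) * (C + 1) ^ (n - 1) = (C + 1) ^ n := h9.symm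
      _ ≤ C * (C + 1) ^ (n - 1) := h8
  omega

end KeyLemma

/-- If `f ∈ S_{n,d}(F)` over an algebraically closed field is nonzero and the only common
zero of its partial derivatives is the origin, then `str(f) ≥ n/2`.  Equivalently, if
`f = g₁h₁ + … + g_rh_r` with each `gᵢ, hᵢ` homogeneous of degree strictly between `0` and
`d` and `2r < n`, then the partial derivatives of `f` have a common zero `a ≠ 0`. -/
theorem strength_lower_bound_of_smooth
    {F : Type*} [Field F] [IsAlgClosed F] {n d : ℕ}
    (f : MvPolynomial (Fin n) F) (hf : f.IsHomogeneous d) :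
    (f ≠ 0 → (∀ a : Fin n → F, (∀ i, eval a (pderiv i f) = 0) → a = 0) →
      (n : ℕ∞) ≤ 2 * strength F n d f) ∧
    (∀ (r : ℕ) (g h : Fin r → MvPolynomial (Fin n) F),
      (∀ i, ∃ a : ℕ, 0 < a ∧ a < d ∧ (g i).IsHomogeneous a) →
      (∀ i, ∃ b : ℕ, 0 < b ∧ b < d ∧ (h i).IsHomogeneous b) →
      f = ∑ i, g i * h i → 2 * r < n →
      ∃ a : Fin n → F, a ≠ 0 ∧ ∀ i, eval a (pderiv i f) = 0) := by
  constructor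
  · intro hf0 hsmooth
    have hbound : ∀ (r : ℕ) (g h : Fin r → MvPolynomial (Fin n) F),
        (∀ i, (g i).totalDegree < d) → (∀ i, (h i).totalDegree < d) →
        f = ∑ i, g i * h i → n ≤ 2 * r := by
      intro r g h hg hh hsum
      by_contra hlt
      push_neg at hlt
      obtain ⟨a, ha, hz⟩ := key_lemma f hf g h hg hh hsum hlt
      exact ha (hsmooth a hz)
    by_cases hS : { N : ℕ∞ | ∃ r : ℕ, N = (r : ℕ∞) ∧
        ∃ g h : Fin r → MvPolynomial (Fin n) F,
        (∀ i, (g i).totalDegree < d) ∧ (∀ i, (h i).totalDegree < d) ∧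
        f = ∑ i, g i * h i } = ∅
    · rw [strength, hS, sInf_empty, ENat.mul_top (by norm_num)]
      exact le_top
    · obtain ⟨N₁, hN₁⟩ := Set.nonempty_iff_ne_empty.mpr hS
      set T : Set ℕ := { r : ℕ | ∃ g h : Fin r → MvPolynomial (Fin n) F,
        (∀ i, (g i).totalDegree < d) ∧ (∀ i, (h i).totalDegree < d) ∧
        f = ∑ i, g i * h i } with hT
      have hTne : T.Nonempty := by
        obtain ⟨r, hNr, g, h, hg, hh, hsum⟩ := hN₁
        exact ⟨r, g, h, hg, hh, hsum⟩
      have hr0 := Nat.sInf_mem hTne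
      obtain ⟨g, h, hg, hh, hsum⟩ := hr0
      have hineq : n ≤ 2 * sInf T := hbound _ g h hg hh hsum
      have hinf : strength F n d f = ((sInf T : ℕ) : ℕ∞) := by
        rw [strength]
        apply le_antisymm
        · exact sInf_le ⟨sInf T, rfl, g, h, hg, hh, hsum⟩
        · refine le_sInf fun N hN => ?_
          obtain ⟨r', hNr', g', h', hg', hh', hsum'⟩ := hN
          have : sInf T ≤ r' := Nat.sInf_le ⟨g', h', hg', hh', hsum'⟩
          rw [hNr']
          exact_mod_cast this
      rw [hinf]
      calc (n : ℕ∞) ≤ ((2 * sInf T : ℕ) : ℕ∞) := by exact_mod_cast hineq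
        _ = 2 * ((sInf T : ℕ) : ℕ∞) := by push_cast; ring
  · intro r g h hg hh hsum hrn
    refine key_lemma f hf g h ?_ ?_ hsum hrn
    · intro i
      obtain ⟨a, ha0, had, hhom⟩ := hg i
      exact lt_of_le_of_lt hhom.totalDegree_le had
    · intro i
      obtain ⟨b, hb0, hbd, hhom⟩ := hh i
      exact lt_of_le_of_lt hhom.totalDegree_le hbd
end

section
/- Fix integers d ≥ 2 and n > k ≥ 0, and suppose n > 2k. Let M be the set of multisets of size d with elements in ℤ/nℤ, on which ℤ acts by x + S := { x + y mod n : y ∈ S } (as a multiset). Let R ⊆ M be the set of multisets all of whose elements lie in {0,1,…,k} (identified with their images in ℤ/nℤ) and which contain 0 at least once. Then any two distinct elements of R lie in distinct ℤ-orbits of M. -/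
/-!
If `x + S = S'` with `0 ∈ S` and `0 ∈ S'`, then the shift `x` is itself an element `m'` of `S'`
and `-x` an element `m` of `S`. Both lie in `{0, …, k}`, so `m' + m ≡ 0 (mod n)` with
`0 ≤ m' + m ≤ 2k < n` forces `m' = 0`: the shift is trivial and `S = S'`.
-/

lemma ZMod.eq_zero_of_natCast_add_natCast_eq_zero {n a b : ℕ} (hlt : a + b < n)
    (h : (a : ZMod n) + b = 0) : a = 0 := by
  have hdvd : n ∣ a + b := (ZMod.natCast_eq_zero_iff _ _).mp (by push_cast; exact h)
  have := Nat.eq_zero_of_dvd_of_lt hdvd hlt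
  omega

lemma Multiset.shift_eq_zero_of_map_add_eq {n k : ℕ} (h2k : 2 * k < n)
    {S S' : Multiset (ZMod n)} (hS0 : (0 : ZMod n) ∈ S)
    (hSel : ∀ y ∈ S, ∃ m : ℕ, m ≤ k ∧ y = (m : ZMod n)) (hS'0 : (0 : ZMod n) ∈ S')
    (hS'el : ∀ y ∈ S', ∃ m : ℕ, m ≤ k ∧ y = (m : ZMod n))
    {c : ZMod n} (hshift : S.map (c + ·) = S') : c = 0 := by
  have hcS' : c ∈ S' := hshift ▸ Multiset.mem_map.mpr ⟨0, hS0, add_zero c⟩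
  obtain ⟨m', hm'k, rfl⟩ := hS'el c hcS'
  obtain ⟨y, hyS, hy0⟩ := Multiset.mem_map.mp (hshift ▸ hS'0)
  obtain ⟨m, hmk, rfl⟩ := hSel y hyS
  rw [ZMod.eq_zero_of_natCast_add_natCast_eq_zero (by omega) hy0, Nat.cast_zero]

theorem distinct_orbits_of_small_width_multisets_general
    (n k : ℕ) (h2k : 2 * k < n)
    (S S' : Multiset (ZMod n))
    (hS0 : (0 : ZMod n) ∈ S)
    (hSel : ∀ y ∈ S, ∃ m : ℕ, m ≤ k ∧ y = (m : ZMod n))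
    (hS'0 : (0 : ZMod n) ∈ S')
    (hS'el : ∀ y ∈ S', ∃ m : ℕ, m ≤ k ∧ y = (m : ZMod n))
    (hne : S ≠ S') :
    ∀ x : ℤ, S.map (fun y => (x : ZMod n) + y) ≠ S' := by
  intro x hshift
  have hx : (x : ZMod n) = 0 :=
    Multiset.shift_eq_zero_of_map_add_eq h2k hS0 hSel hS'0 hS'el hshift
  apply hne
  rw [← hshift, hx]
  simp

/-- If `n > 2k`, then any two distinct multisets of size `d` with elements in
`{0,…,k} ⊆ ℤ/nℤ` containing `0` lie in distinct orbits of the shift action of `ℤ` on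
multisets over `ℤ/nℤ`. -/
theorem distinct_orbits_of_small_width_multisets
    (d n k : ℕ) (hd : 2 ≤ d) (hkn : k < n) (h2k : 2 * k < n)
    (S S' : Multiset (ZMod n))
    (hScard : Multiset.card S = d) (hS0 : (0 : ZMod n) ∈ S)
    (hSel : ∀ y ∈ S, ∃ m : ℕ, m ≤ k ∧ y = (m : ZMod n))
    (hS'card : Multiset.card S' = d) (hS'0 : (0 : ZMod n) ∈ S')
    (hS'el : ∀ y ∈ S', ∃ m : ℕ, m ≤ k ∧ y = (m : ZMod n))
    (hne : S ≠ S') :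
    ∀ x : ℤ, S.map (fun y => (x : ZMod n) + y) ≠ S' :=
  distinct_orbits_of_small_width_multisets_general n k h2k S S' hS0 hSel hS'0 hS'el hne
end

section
/- Fix integers d ≥ 2 and n > k ≥ 0, and suppose (2/3)n > k ≥ (1/2)n. Let M be the set of multisets of size d with elements in ℤ/nℤ, with ℤ acting by x + S := { x + y mod n : y ∈ S }, and let R ⊆ M be the multisets with all elements in {0,…,k} containing 0 at least once. Then the number of ℤ-orbits of M that intersect R equals C((d−1)+k, d−1) − (1/2)·( (2k−n+1)·C((d−2)+(2k−n+1), d−2) − δ·C((d/2−1)+(k−n/2), d/2−1) ), where δ = 1 if both d and n are even and δ = 0 otherwise, and C(a,b) denotes the binomial coefficient. -/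
namespace OrbitAux

open Multiset Finset

section Mfin

variable {γ : Type*} [DecidableEq γ]

/-- The finset of multisets of size `t` with all elements in `s`. -/
def Mfin (s : Finset γ) (t : ℕ) : Finset (Multiset γ) :=
  (Finset.univ : Finset (Sym {x // x ∈ s} t)).image (fun m => m.1.map Subtype.val)

lemma mem_Mfin {s : Finset γ} {t : ℕ} {S : Multiset γ} :
    S ∈ Mfin s t ↔ Multiset.card S = t ∧ ∀ a ∈ S, a ∈ s := by
  constructor
  · intro h
    rcases Finset.mem_image.1 h with ⟨m, -, rfl⟩
    refine ⟨by simp [m.2], ?_⟩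
    intro a ha
    rcases Multiset.mem_map.1 ha with ⟨b, -, rfl⟩
    exact b.2
  · rintro ⟨hcard, hmem⟩
    refine Finset.mem_image.2 ⟨⟨S.attach.map (fun x => (⟨x.1, hmem x.1 x.2⟩ : {x // x ∈ s})), by
      simp [hcard]⟩, Finset.mem_univ _, ?_⟩
    simp [Multiset.map_map]

lemma card_Mfin (s : Finset γ) (t : ℕ) :
    (Mfin s t).card = (s.card + t - 1).choose t := by
  have hinj : Function.Injective (fun m : Sym {x // x ∈ s} t => m.1.map Subtype.val) :=
    fun m₁ m₂ h => Subtype.ext (Multiset.map_injective Subtype.val_injective h)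
  rw [Mfin, Finset.card_image_of_injective _ hinj,
    Finset.card_univ, Sym.card_sym_eq_choose, Fintype.card_coe]

lemma card_filter_mem_Mfin (s : Finset γ) (a : γ) (ha : a ∈ s) (t : ℕ) :
    ((Mfin s (t+1)).filter (fun S => a ∈ S)).card = (Mfin s t).card := by
  refine Finset.card_bij' (fun S _ => S.erase a) (fun T _ => a ::ₘ T) ?_ ?_ ?_ ?_
  · intro S hS
    rcases Finset.mem_filter.1 hS with ⟨hS1, hS2⟩
    rcases mem_Mfin.1 hS1 with ⟨hcard, hmem⟩
    refine mem_Mfin.2 ⟨?_, ?_⟩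
    · rw [Multiset.card_erase_of_mem hS2, hcard]; rfl
    · intro b hb
      exact hmem b (Multiset.mem_of_mem_erase hb)
  · intro T hT
    rcases mem_Mfin.1 hT with ⟨hcard, hmem⟩
    refine Finset.mem_filter.2 ⟨mem_Mfin.2 ⟨by simp [hcard], ?_⟩, Multiset.mem_cons_self _ _⟩
    intro b hb
    rcases Multiset.mem_cons.1 hb with rfl | hb
    · exact ha
    · exact hmem b hb
  · intro S hS
    exact Multiset.cons_erase (Finset.mem_filter.1 hS).2
  · intro T hT
    exact Multiset.erase_cons_head a T

lemma card_filter_mem2_Mfin (s : Finset γ) (a b : γ) (ha : a ∈ s) (hb : b ∈ s) (hab : a ≠ b)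
    (t : ℕ) :
    ((Mfin s (t+2)).filter (fun S => a ∈ S ∧ b ∈ S)).card = (Mfin s t).card := by
  have h1 : ((Mfin s (t+2)).filter (fun S => a ∈ S ∧ b ∈ S)).card
      = (((Mfin s (t+1)).filter (fun S => b ∈ S))).card := by
    refine Finset.card_bij' (fun S _ => S.erase a) (fun T _ => a ::ₘ T) ?_ ?_ ?_ ?_
    · intro S hS
      rcases Finset.mem_filter.1 hS with ⟨hS1, hS2, hS3⟩
      rcases mem_Mfin.1 hS1 with ⟨hcard, hmem⟩
      refine Finset.mem_filter.2 ⟨mem_Mfin.2 ⟨?_, ?_⟩, ?_⟩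
      · rw [Multiset.card_erase_of_mem hS2, hcard]; rfl
      · exact fun c hc => hmem c (Multiset.mem_of_mem_erase hc)
      · exact (Multiset.mem_erase_of_ne (fun h => hab h.symm)).2 hS3
    · intro T hT
      rcases Finset.mem_filter.1 hT with ⟨hT1, hT2⟩
      rcases mem_Mfin.1 hT1 with ⟨hcard, hmem⟩
      refine Finset.mem_filter.2 ⟨mem_Mfin.2 ⟨by simp [hcard], ?_⟩,
        Multiset.mem_cons_self _ _, Multiset.mem_cons_of_mem hT2⟩
      intro c hc
      rcases Multiset.mem_cons.1 hc with rfl | hc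
      · exact ha
      · exact hmem c hc
    · intro S hS
      exact Multiset.cons_erase (Finset.mem_filter.1 hS).2.1
    · intro T hT
      exact Multiset.erase_cons_head a T
  rw [h1, card_filter_mem_Mfin s b hb t]

end Mfin

section ZModPart

variable {n : ℕ}

/-- Shift a multiset over `ZMod n` by `c`. -/
def shf (c : ZMod n) (S : Multiset (ZMod n)) : Multiset (ZMod n) :=
  S.map (fun y => c + y)

lemma shf_shf (c c' : ZMod n) (S : Multiset (ZMod n)) :
    shf c (shf c' S) = shf (c + c') S := by
  simp [shf, Multiset.map_map, Function.comp, add_assoc]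

lemma shf_zero (S : Multiset (ZMod n)) : shf 0 S = S := by
  simp [shf]

/-- The predicate describing `R`. -/
def Rp (n k d : ℕ) (S : Multiset (ZMod n)) : Prop :=
  Multiset.card S = d ∧ (0 : ZMod n) ∈ S ∧ ∀ y ∈ S, y.val ≤ k

lemma neg_cast [NeZero n] {j : ℕ} (hjn : j < n) :
    -((j : ℕ) : ZMod n) = ((n - j : ℕ) : ZMod n) := by
  have h : ((n - j : ℕ) : ZMod n) + ((j : ℕ) : ZMod n) = 0 := by
    rw [← Nat.cast_add]
    have h2 : n - j + j = n := by omega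
    rw [h2, ZMod.natCast_self]
  linear_combination (norm := ring_nf) -h

lemma val_injective [NeZero n] : Function.Injective (ZMod.val (n := n)) := by
  intro a b h
  rw [← ZMod.natCast_zmod_val a, ← ZMod.natCast_zmod_val b, h]

lemma window [NeZero n] {k d : ℕ} (hkn : k < n) {S : Multiset (ZMod n)} {c : ZMod n}
    (hS : Rp n k d S) (hS' : Rp n k d (shf c S)) (hc : c ≠ 0) :
    n - k ≤ c.val ∧ c.val ≤ k ∧ ((n - c.val : ℕ) : ZMod n) ∈ S ∧
      ∀ y ∈ S, y.val ≤ k - c.val ∨ n - c.val ≤ y.val := by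
  have hj0 : 0 < c.val := Nat.pos_of_ne_zero (fun h => hc ((ZMod.val_eq_zero c).1 h))
  have hjn : c.val < n := ZMod.val_lt c
  have hcv : ((c.val : ℕ) : ZMod n) = c := ZMod.natCast_zmod_val c
  have hmem : ((n - c.val : ℕ) : ZMod n) ∈ S := by
    rcases Multiset.mem_map.1 hS'.2.1 with ⟨y, hy, hcy⟩
    have hy' : y = -c := by linear_combination hcy
    subst hy'
    rwa [← hcv, neg_cast hjn] at hy
  have hval_sub : (((n - c.val : ℕ) : ZMod n)).val = n - c.val :=
    ZMod.val_cast_of_lt (by omega)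
  have h1 : n - k ≤ c.val := by
    have := hS.2.2 _ hmem
    rw [hval_sub] at this
    omega
  have h2 : c.val ≤ k := by
    have hcmem : c ∈ shf c S := Multiset.mem_map.2 ⟨0, hS.2.1, by ring⟩
    have := hS'.2.2 _ hcmem
    omega
  refine ⟨h1, h2, hmem, ?_⟩
  intro y hy
  have hcyS : c + y ∈ shf c S := Multiset.mem_map.2 ⟨y, hy, rfl⟩
  have hkey : (c.val + y.val) % n ≤ k := by
    have := hS'.2.2 _ hcyS
    rwa [ZMod.val_add] at this
  have hyn : y.val < n := ZMod.val_lt y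
  rcases lt_or_ge (c.val + y.val) n with h | h
  · rw [Nat.mod_eq_of_lt h] at hkey
    left; omega
  · right; omega

lemma window_rev [NeZero n] {k d : ℕ} (hkn : k < n) {j : ℕ}
    (hj1 : n - k ≤ j) (hj2 : j ≤ k) {S : Multiset (ZMod n)}
    (hcard : Multiset.card S = d) (h0 : (0 : ZMod n) ∈ S)
    (hmem : ((n - j : ℕ) : ZMod n) ∈ S)
    (hw : ∀ y ∈ S, (y.val ≤ k - j) ∨ (n - j ≤ y.val ∧ y.val ≤ k)) :
    Rp n k d S ∧ Rp n k d (shf ((j : ℕ) : ZMod n) S) := by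
  have hj0 : 0 < j := by omega
  have hjn : j < n := by omega
  have hjv : (((j : ℕ) : ZMod n)).val = j := ZMod.val_cast_of_lt hjn
  constructor
  · refine ⟨hcard, h0, ?_⟩
    intro y hy
    rcases hw y hy with h | h
    · omega
    · exact h.2
  · refine ⟨by simp [shf, hcard], ?_, ?_⟩
    · refine Multiset.mem_map.2 ⟨((n - j : ℕ) : ZMod n), hmem, ?_⟩
      rw [← Nat.cast_add]
      have h2 : j + (n - j) = n := by omega
      rw [h2, ZMod.natCast_self]
    · intro y' hy'
      rcases Multiset.mem_map.1 hy' with ⟨y, hy, rfl⟩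
      rw [ZMod.val_add, hjv]
      have hyn : y.val < n := ZMod.val_lt y
      rcases hw y hy with h | h
      · rw [Nat.mod_eq_of_lt (by omega)]
        omega
      · have hge : n ≤ j + y.val := by omega
        have hmod : (j + y.val) % n = j + y.val - n := by
          rw [Nat.mod_eq_sub_mod hge, Nat.mod_eq_of_lt (by omega)]
        rw [hmod]
        omega

lemma shift_unique [NeZero n] {k d : ℕ} (hkn : k < n) (hupper : 3 * k < 2 * n)
    {S : Multiset (ZMod n)} {c₁ c₂ : ZMod n}
    (hS : Rp n k d S) (h1 : Rp n k d (shf c₁ S)) (h2 : Rp n k d (shf c₂ S))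
    (hc1 : c₁ ≠ 0) (hc2 : c₂ ≠ 0) : c₁ = c₂ := by
  have key : ∀ a b : ZMod n, Rp n k d (shf a S) → Rp n k d (shf b S) →
      a ≠ 0 → b ≠ 0 → a.val < b.val → False := by
    intro a b ha hb ha0 hb0 hab
    obtain ⟨ha1, ha2, hamem, haw⟩ := window hkn hS ha ha0
    obtain ⟨hb1, hb2, hbmem, hbw⟩ := window hkn hS hb hb0
    have hbn : b.val < n := ZMod.val_lt b
    have hv : (((n - b.val : ℕ) : ZMod n)).val = n - b.val := ZMod.val_cast_of_lt (by omega)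
    rcases haw _ hbmem with h | h <;> rw [hv] at h <;> omega
  rcases lt_trichotomy c₁.val c₂.val with h | h | h
  · exact absurd (key c₁ c₂ h1 h2 hc1 hc2 h) (fun f => f.elim)
  · exact val_injective h
  · exact absurd (key c₂ c₁ h2 h1 hc2 hc1 h) (fun f => f.elim)

lemma sym_shift [NeZero n] {k d : ℕ} (hkn : k < n) (hupper : 3 * k < 2 * n)
    {S : Multiset (ZMod n)} {c : ZMod n}
    (hS : Rp n k d S) (hfix : shf c S = S) (hc : c ≠ 0) : c.val * 2 = n := by
  have h2c : shf (c + c) S = S := by rw [← shf_shf, hfix, hfix]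
  have hcc : c + c = 0 := by
    by_contra hne
    have heq := shift_unique hkn hupper hS (by rw [hfix]; exact hS) (by rw [h2c]; exact hS) hc hne
    have h0 : c + 0 = c + c := by rw [add_zero]; exact heq
    exact hc (add_left_cancel h0).symm
  have hv : (c + c).val = 0 := by rw [hcc, ZMod.val_zero]
  rw [ZMod.val_add] at hv
  have hj0 : 0 < c.val := Nat.pos_of_ne_zero (fun h => hc ((ZMod.val_eq_zero c).1 h))
  have hjn : c.val < n := ZMod.val_lt c
  rcases lt_or_ge (c.val + c.val) n with h | h
  · rw [Nat.mod_eq_of_lt h] at hv; omega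
  · rw [Nat.mod_eq_sub_mod h, Nat.mod_eq_of_lt (by omega)] at hv; omega

lemma sym_structure [NeZero n] {k d : ℕ} {S : Multiset (ZMod n)} {c : ZMod n}
    (hS : Rp n k d S) (hfix : shf c S = S) (hval : c.val * 2 = n)
    [DecidablePred (fun y : ZMod n => y.val < c.val)] :
    S = S.filter (fun y => y.val < c.val)
      + (S.filter (fun y => y.val < c.val)).map (fun y => c + y) := by
  have hswap : ∀ y : ZMod n, (c + y).val < c.val ↔ ¬ (y.val < c.val) := by
    intro y
    have hyn : y.val < n := ZMod.val_lt y
    rw [ZMod.val_add]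
    rcases lt_or_ge (c.val + y.val) n with h | h
    · rw [Nat.mod_eq_of_lt h]; omega
    · rw [Nat.mod_eq_sub_mod h, Nat.mod_eq_of_lt (by omega)]; omega
  have key : S.filter (fun y => ¬ y.val < c.val)
      = (S.filter (fun y => y.val < c.val)).map (fun y => c + y) := by
    conv_lhs => rw [← hfix]
    rw [shf, Multiset.filter_map]
    congr 1
    apply Multiset.filter_congr
    intro y _
    simp only [Function.comp]
    rw [not_iff_comm.1 (hswap y).symm]
  conv_lhs => rw [← Multiset.filter_add_not (fun y => y.val < c.val) S]
  rw [key]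

/-- The orbit of a multiset under the shift action. -/
def orb (S : Multiset (ZMod n)) : Set (Multiset (ZMod n)) :=
  {S' | ∃ c : ZMod n, shf c S = S'}

lemma orb_eq_int [NeZero n] (S : Multiset (ZMod n)) :
    {S' | ∃ x : ℤ, S.map (fun y => (x : ZMod n) + y) = S'} = orb S := by
  ext T
  constructor
  · rintro ⟨x, rfl⟩
    exact ⟨(x : ZMod n), rfl⟩
  · rintro ⟨c, rfl⟩
    refine ⟨(c.val : ℤ), ?_⟩
    rw [shf]
    norm_cast
    rw [ZMod.natCast_zmod_val]

lemma mem_orb_self (S : Multiset (ZMod n)) : S ∈ orb S := ⟨0, shf_zero S⟩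

lemma orb_eq_of_mem {S S' : Multiset (ZMod n)} (h : S' ∈ orb S) : orb S' = orb S := by
  rcases h with ⟨c₀, rfl⟩
  ext T
  constructor
  · rintro ⟨c, rfl⟩
    exact ⟨c + c₀, (shf_shf c c₀ S).symm⟩
  · rintro ⟨c, rfl⟩
    refine ⟨c - c₀, ?_⟩
    rw [shf_shf]
    congr 1
    ring

lemma orb_eq_iff {S S' : Multiset (ZMod n)} : orb S' = orb S ↔ ∃ c : ZMod n, shf c S = S' := by
  constructor
  · intro h
    have : S' ∈ orb S' := mem_orb_self S'
    rw [h] at this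
    exact this
  · intro h
    exact orb_eq_of_mem h

lemma card_val_filter [NeZero n] (p : ℕ → Prop) [DecidablePred p] :
    (Finset.univ.filter (fun y : ZMod n => p y.val)).card
      = ((Finset.range n).filter p).card := by
  apply Finset.card_nbij (i := ZMod.val)
  · intro a ha
    simp only [Finset.mem_coe, Finset.coe_filter, Set.mem_setOf_eq, Finset.mem_filter, Finset.mem_univ, true_and] at ha
    exact Finset.mem_filter.2 ⟨Finset.mem_range.2 (ZMod.val_lt a), ha⟩
  · intro a _ b _ h
    exact val_injective h
  · intro m hm
    simp only [Finset.coe_filter, Set.mem_setOf_eq, Finset.mem_range] at hm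
    refine ⟨(m : ZMod n), ?_, ZMod.val_cast_of_lt hm.1⟩
    simp only [Finset.coe_filter, Set.mem_setOf_eq, Finset.mem_univ, true_and]
    rw [ZMod.val_cast_of_lt hm.1]
    exact hm.2

end ZModPart

end OrbitAux
open OrbitAux in
/-- **Orbit count.**  Suppose `d ≥ 2` and `(2/3)n > k ≥ (1/2)n` (with `k < n`).  Consider
the set `M` of multisets of size `d` over `ℤ/nℤ` with the shift action of `ℤ`, and let
`R ⊆ M` consist of the multisets with all elements in `{0,…,k}` containing `0` at least
once.  The number of `ℤ`-orbits of `M` that intersect `R` equals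
`C((d-1)+k, d-1) - (1/2)·((2k-n+1)·C((d-2)+(2k-n+1), d-2) - δ·C((d/2-1)+(k-n/2), d/2-1))`,
where `δ = 1` if both `d` and `n` are even and `δ = 0` otherwise. -/
theorem orbit_count_of_small_width_multisets
    (d n k : ℕ) (hd : 2 ≤ d) (hkn : k < n) (hupper : 3 * k < 2 * n) (hlower : n ≤ 2 * k) :
    (Nat.card { O : Set (Multiset (ZMod n)) |
        (∃ S : Multiset (ZMod n), Multiset.card S = d ∧
          O = { S' | ∃ x : ℤ, S.map (fun y => (x : ZMod n) + y) = S' }) ∧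
        (O ∩ { S : Multiset (ZMod n) | Multiset.card S = d ∧ (0 : ZMod n) ∈ S ∧
            ∀ y ∈ S, ∃ m : ℕ, m ≤ k ∧ y = (m : ZMod n) }).Nonempty } : ℚ) =
      (Nat.choose (d - 1 + k) (d - 1) : ℚ) -
        (1 / 2 : ℚ) *
          (((2 * k - n + 1 : ℕ) : ℚ) *
              (Nat.choose (d - 2 + (2 * k - n + 1)) (d - 2) : ℚ) -
            (if 2 ∣ d ∧ 2 ∣ n then
                (Nat.choose (d / 2 - 1 + (k - n / 2)) (d / 2 - 1) : ℚ)
              else 0)) := by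
  classical
  haveI : NeZero n := ⟨by omega⟩
  -- bridge between the statement's predicate and `Rp`
  have hRpIff : ∀ S : Multiset (ZMod n),
      (Multiset.card S = d ∧ (0 : ZMod n) ∈ S ∧ ∀ y ∈ S, ∃ m : ℕ, m ≤ k ∧ y = (m : ZMod n))
        ↔ Rp n k d S := by
    intro S
    constructor
    · rintro ⟨h1, h2, h3⟩
      refine ⟨h1, h2, fun y hy => ?_⟩
      rcases h3 y hy with ⟨m, hm, rfl⟩
      rw [ZMod.val_cast_of_lt (by omega)]
      exact hm
    · rintro ⟨h1, h2, h3⟩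
      exact ⟨h1, h2, fun y hy => ⟨y.val, h3 y hy, (ZMod.natCast_zmod_val y).symm⟩⟩
  set W0 : Finset (ZMod n) := Finset.univ.filter (fun y => y.val ≤ k) with hW0def
  set Rfin : Finset (Multiset (ZMod n)) :=
    (Mfin W0 d).filter (fun S => (0 : ZMod n) ∈ S) with hRdef
  have hRfin_iff : ∀ S, S ∈ Rfin ↔ Rp n k d S := by
    intro S
    rw [hRdef, Finset.mem_filter, mem_Mfin]
    constructor
    · rintro ⟨⟨h1, h2⟩, h3⟩
      exact ⟨h1, h3, fun y hy => (Finset.mem_filter.1 (h2 y hy)).2⟩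
    · rintro ⟨h1, h2, h3⟩
      exact ⟨⟨h1, fun y hy => Finset.mem_filter.2 ⟨Finset.mem_univ _, h3 y hy⟩⟩, h2⟩
  -- identify the orbit set with a finset image
  have hOset : { O : Set (Multiset (ZMod n)) |
        (∃ S : Multiset (ZMod n), Multiset.card S = d ∧
          O = { S' | ∃ x : ℤ, S.map (fun y => (x : ZMod n) + y) = S' }) ∧
        (O ∩ { S : Multiset (ZMod n) | Multiset.card S = d ∧ (0 : ZMod n) ∈ S ∧
            ∀ y ∈ S, ∃ m : ℕ, m ≤ k ∧ y = (m : ZMod n) }).Nonempty }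
      = ↑(Rfin.image orb) := by
    ext O
    simp only [Set.mem_setOf_eq, Finset.coe_image, Set.mem_image, Finset.mem_coe]
    constructor
    · rintro ⟨⟨S, hcard, rfl⟩, ⟨S', hS'O, hS'R⟩⟩
      rw [orb_eq_int] at hS'O ⊢
      refine ⟨S', (hRfin_iff S').2 ((hRpIff S').1 hS'R), orb_eq_of_mem hS'O⟩
    · rintro ⟨S, hS, rfl⟩
      have hRpS := (hRfin_iff S).1 hS
      refine ⟨⟨S, hRpS.1, (orb_eq_int S).symm⟩, ⟨S, mem_orb_self S, (hRpIff S).2 hRpS⟩⟩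
  rw [hOset, Nat.card_coe_set_eq, Set.ncard_coe_finset]
  set N := (Rfin.image orb).card with hNdef
  -- the "double representation" set
  set Dpred : Multiset (ZMod n) → Prop :=
    fun S => ∃ c : ZMod n, c ≠ 0 ∧ shf c S ∈ Rfin ∧ shf c S ≠ S with hDpreddef
  set D : Finset (Multiset (ZMod n)) := Rfin.filter Dpred with hDdef
  -- first identity: 2 * |R| = 2 * N + |D|
  have hE1 : 2 * Rfin.card = 2 * N + D.card := by
    have hfib : ∀ O ∈ Rfin.image orb,
        2 * (Rfin.filter (fun S => orb S = O)).card
          = 2 + (D.filter (fun S => orb S = O)).card := by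
      intro O hO
      rcases Finset.mem_image.1 hO with ⟨S₀, hS₀, rfl⟩
      have hRpS₀ := (hRfin_iff S₀).1 hS₀
      have hmemfib : ∀ S', S' ∈ Rfin.filter (fun S => orb S = orb S₀)
          ↔ (S' ∈ Rfin ∧ ∃ c, shf c S₀ = S') := by
        intro S'
        rw [Finset.mem_filter, orb_eq_iff]
      have hDfib : D.filter (fun S => orb S = orb S₀)
          = (Rfin.filter (fun S => orb S = orb S₀)).filter Dpred := by
        rw [hDdef, Finset.filter_comm]
      by_cases hD : Dpred S₀
      · obtain ⟨c₀, hc₀, hmem₁, hne₁⟩ := hD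
        have hfibeq : Rfin.filter (fun S => orb S = orb S₀) = {S₀, shf c₀ S₀} := by
          ext S'
          rw [hmemfib, Finset.mem_insert, Finset.mem_singleton]
          constructor
          · rintro ⟨hR, c, rfl⟩
            by_cases hc : c = 0
            · subst hc; left; exact shf_zero S₀
            · right
              have hcc : c = c₀ := shift_unique hkn hupper hRpS₀ ((hRfin_iff _).1 hR)
                ((hRfin_iff _).1 hmem₁) hc hc₀
              rw [hcc]
          · intro h
            rcases h with h | h
            · rw [h]; exact ⟨hS₀, 0, shf_zero S₀⟩
            · rw [h]; exact ⟨hmem₁, c₀, rfl⟩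
        have hne' : S₀ ≠ shf c₀ S₀ := fun h => hne₁ h.symm
        have hDPS₁ : Dpred (shf c₀ S₀) := by
          refine ⟨-c₀, neg_ne_zero.2 hc₀, ?_, ?_⟩
          · rw [shf_shf, neg_add_cancel, shf_zero]; exact hS₀
          · rw [shf_shf, neg_add_cancel, shf_zero]; exact fun h => hne₁ h.symm
        have hfilterD : ({S₀, shf c₀ S₀} : Finset (Multiset (ZMod n))).filter Dpred
            = {S₀, shf c₀ S₀} := by
          rw [Finset.filter_eq_self]
          intro x hx
          rcases Finset.mem_insert.1 hx with rfl | hx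
          · exact ⟨c₀, hc₀, hmem₁, hne₁⟩
          · rw [Finset.mem_singleton.1 hx]; exact hDPS₁
        rw [hDfib, hfibeq, hfilterD, Finset.card_insert_of_notMem (by simpa using hne'),
          Finset.card_singleton]
      · have hnot : ∀ c : ZMod n, c ≠ 0 → shf c S₀ ∈ Rfin → shf c S₀ = S₀ := by
          intro c hc hm
          by_contra hne
          exact hD ⟨c, hc, hm, hne⟩
        have hfibeq : Rfin.filter (fun S => orb S = orb S₀) = {S₀} := by
          ext S'
          rw [hmemfib, Finset.mem_singleton]
          constructor
          · rintro ⟨hR, c, rfl⟩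
            by_cases hc : c = 0
            · subst hc; exact shf_zero S₀
            · exact hnot c hc hR
          · intro h; rw [h]; exact ⟨hS₀, 0, shf_zero S₀⟩
        have hempty : ({S₀} : Finset (Multiset (ZMod n))).filter Dpred = ∅ := by
          rw [Finset.filter_eq_empty_iff]
          intro x hx
          rw [Finset.mem_singleton.1 hx]
          exact hD
        rw [hDfib, hfibeq, hempty, Finset.card_singleton, Finset.card_empty]
    have hsum1 := Finset.card_eq_sum_card_image orb Rfin
    have hsum2 : D.card = ∑ O ∈ Rfin.image orb, (D.filter (fun S => orb S = O)).card := by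
      apply Finset.card_eq_sum_card_fiberwise
      intro S hS
      rw [hDdef, Finset.mem_coe, Finset.mem_filter] at hS
      exact Finset.mem_image_of_mem orb hS.1
    calc 2 * Rfin.card
        = ∑ O ∈ Rfin.image orb, 2 * (Rfin.filter (fun S => orb S = O)).card := by
          rw [hsum1, Finset.mul_sum]
      _ = ∑ O ∈ Rfin.image orb, (2 + (D.filter (fun S => orb S = O)).card) :=
          Finset.sum_congr rfl hfib
      _ = 2 * N + D.card := by
          rw [Finset.sum_add_distrib, Finset.sum_const, ← hsum2, smul_eq_mul, mul_comm]
  -- the A_j sets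
  set J : Finset ℕ := Finset.Icc (n - k) k with hJdef
  set Wj : ℕ → Finset (ZMod n) := fun j =>
    Finset.univ.filter (fun y => y.val ≤ k - j ∨ (n - j ≤ y.val ∧ y.val ≤ k)) with hWjdef
  set A : ℕ → Finset (Multiset (ZMod n)) := fun j =>
    (Mfin (Wj j) d).filter (fun S => (0 : ZMod n) ∈ S ∧ ((n - j : ℕ) : ZMod n) ∈ S) with hAdef
  set SymF : Finset (Multiset (ZMod n)) :=
    Rfin.filter (fun S => ∃ c : ZMod n, c ≠ 0 ∧ shf c S = S) with hSymdef
  have hAiff : ∀ j ∈ J, ∀ S, S ∈ A j ↔ (Rp n k d S ∧ Rp n k d (shf ((j : ℕ) : ZMod n) S)) := by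
    intro j hj S
    rw [hJdef, Finset.mem_Icc] at hj
    have hjn : j < n := by omega
    have hjv : (((j : ℕ) : ZMod n)).val = j := ZMod.val_cast_of_lt hjn
    have hj0 : (((j : ℕ) : ZMod n)) ≠ 0 := by
      intro h
      rw [h, ZMod.val_zero] at hjv
      omega
    constructor
    · intro h
      simp only [hAdef] at h
      rw [Finset.mem_filter, mem_Mfin] at h
      obtain ⟨⟨hcard, hmem⟩, h0, hnj⟩ := h
      refine window_rev hkn hj.1 hj.2 hcard h0 hnj ?_
      intro y hy
      have hyW := hmem y hy
      simp only [hWjdef] at hyW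
      rw [Finset.mem_filter] at hyW
      exact hyW.2
    · rintro ⟨hRS, hRshift⟩
      obtain ⟨h1, h2, hmem, hw⟩ := window hkn hRS hRshift hj0
      rw [hjv] at h1 h2 hmem hw
      simp only [hAdef]
      rw [Finset.mem_filter, mem_Mfin]
      refine ⟨⟨hRS.1, ?_⟩, hRS.2.1, hmem⟩
      intro y hy
      simp only [hWjdef]
      rw [Finset.mem_filter]
      refine ⟨Finset.mem_univ _, ?_⟩
      rcases hw y hy with h | h
      · exact Or.inl h
      · exact Or.inr ⟨h, hRS.2.2 y hy⟩
  -- second identity: |D| + |SymF| = ∑_{j ∈ J} |A j|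
  have hE2 : D.card + SymF.card = ∑ j ∈ J, (A j).card := by
    have hjne : ∀ j ∈ J, (((j : ℕ) : ZMod n)) ≠ 0 := by
      intro j hj h
      rw [hJdef, Finset.mem_Icc] at hj
      have hjv : (((j : ℕ) : ZMod n)).val = j := ZMod.val_cast_of_lt (by omega)
      rw [h, ZMod.val_zero] at hjv
      omega
    have hmemJ : ∀ j ∈ J, j < n := by
      intro j hj
      rw [hJdef, Finset.mem_Icc] at hj
      omega
    have hdisj : ∀ j₁ ∈ J, ∀ j₂ ∈ J, j₁ ≠ j₂ → Disjoint (A j₁) (A j₂) := by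
      intro j₁ hj₁ j₂ hj₂ hne
      rw [Finset.disjoint_left]
      intro S h1 h2
      obtain ⟨hR1, hs1⟩ := (hAiff j₁ hj₁ S).1 h1
      obtain ⟨hR2, hs2⟩ := (hAiff j₂ hj₂ S).1 h2
      have heq := shift_unique hkn hupper hR1 hs1 hs2 (hjne j₁ hj₁) (hjne j₂ hj₂)
      apply hne
      have hv1 : (((j₁ : ℕ) : ZMod n)).val = j₁ := ZMod.val_cast_of_lt (hmemJ j₁ hj₁)
      have hv2 : (((j₂ : ℕ) : ZMod n)).val = j₂ := ZMod.val_cast_of_lt (hmemJ j₂ hj₂)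
      rw [← hv1, ← hv2, heq]
    have hUnion : J.biUnion A = D ∪ SymF := by
      ext S
      rw [Finset.mem_biUnion, Finset.mem_union]
      constructor
      · rintro ⟨j, hj, hS⟩
        obtain ⟨hRS, hshift⟩ := (hAiff j hj S).1 hS
        by_cases heq : shf ((j : ℕ) : ZMod n) S = S
        · right
          rw [hSymdef, Finset.mem_filter]
          exact ⟨(hRfin_iff S).2 hRS, ⟨((j : ℕ) : ZMod n), hjne j hj, heq⟩⟩
        · left
          rw [hDdef, Finset.mem_filter]
          exact ⟨(hRfin_iff S).2 hRS,
            ⟨((j : ℕ) : ZMod n), hjne j hj, (hRfin_iff _).2 hshift, heq⟩⟩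
      · intro h
        have hex : ∃ c : ZMod n, c ≠ 0 ∧ Rp n k d S ∧ Rp n k d (shf c S) := by
          rcases h with h | h
          · rw [hDdef, Finset.mem_filter] at h
            obtain ⟨hR, c, hc, hcR, -⟩ := h
            exact ⟨c, hc, (hRfin_iff S).1 hR, (hRfin_iff _).1 hcR⟩
          · rw [hSymdef, Finset.mem_filter] at h
            obtain ⟨hR, c, hc, hfix⟩ := h
            exact ⟨c, hc, (hRfin_iff S).1 hR, by rw [hfix]; exact (hRfin_iff S).1 hR⟩
        obtain ⟨c, hc, hRS, hcR⟩ := hex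
        obtain ⟨h1, h2, -, -⟩ := window hkn hRS hcR hc
        have hcvJ : c.val ∈ J := by rw [hJdef, Finset.mem_Icc]; exact ⟨h1, h2⟩
        refine ⟨c.val, hcvJ, ?_⟩
        rw [hAiff c.val hcvJ S, ZMod.natCast_zmod_val]
        exact ⟨hRS, hcR⟩
    have hDS : Disjoint D SymF := by
      rw [Finset.disjoint_left]
      intro S hD hSym
      rw [hDdef, Finset.mem_filter] at hD
      rw [hSymdef, Finset.mem_filter] at hSym
      obtain ⟨hR, c₁, hc₁, hc₁R, hc₁ne⟩ := hD
      obtain ⟨-, c₂, hc₂, hfix⟩ := hSym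
      have heq := shift_unique hkn hupper ((hRfin_iff S).1 hR) ((hRfin_iff _).1 hc₁R)
        (by rw [hfix]; exact (hRfin_iff S).1 hR) hc₁ hc₂
      rw [heq, hfix] at hc₁ne
      exact hc₁ne rfl
    calc D.card + SymF.card = (D ∪ SymF).card := (Finset.card_union_of_disjoint hDS).symm
      _ = (J.biUnion A).card := by rw [hUnion]
      _ = ∑ j ∈ J, (A j).card := Finset.card_biUnion hdisj
  -- cardinalities
  have hcardR : Rfin.card = Nat.choose (d - 1 + k) (d - 1) := by
    have hW0card : W0.card = k + 1 := by
      rw [hW0def, card_val_filter (fun m => m ≤ k)]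
      have hset : (Finset.range n).filter (fun m => m ≤ k) = Finset.range (k + 1) := by
        ext m
        simp only [Finset.mem_filter, Finset.mem_range]
        omega
      rw [hset, Finset.card_range]
    have hd1 : d - 1 + 1 = d := by omega
    have h0W : (0 : ZMod n) ∈ W0 := by
      rw [hW0def, Finset.mem_filter]
      exact ⟨Finset.mem_univ _, by rw [ZMod.val_zero]; omega⟩
    have hkey := card_filter_mem_Mfin W0 (0 : ZMod n) h0W (d - 1)
    rw [hd1] at hkey
    rw [hRdef, hkey, card_Mfin, hW0card]
    congr 1
    omega
  have hcardA : ∀ j ∈ J, (A j).card = Nat.choose (d - 2 + (2 * k - n + 1)) (d - 2) := by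
    intro j hj
    rw [hJdef, Finset.mem_Icc] at hj
    have hjn : j < n := by omega
    have hWjcard : (Wj j).card = 2 * k - n + 2 := by
      simp only [hWjdef]
      rw [card_val_filter (fun m => m ≤ k - j ∨ (n - j ≤ m ∧ m ≤ k))]
      have hset : (Finset.range n).filter (fun m => m ≤ k - j ∨ (n - j ≤ m ∧ m ≤ k))
          = Finset.range (k - j + 1) ∪ Finset.Icc (n - j) k := by
        ext m
        simp only [Finset.mem_filter, Finset.mem_range, Finset.mem_union, Finset.mem_Icc]
        omega
      rw [hset, Finset.card_union_of_disjoint, Finset.card_range, Nat.card_Icc]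
      · omega
      · rw [Finset.disjoint_left]
        intro m hm1 hm2
        rw [Finset.mem_range] at hm1
        rw [Finset.mem_Icc] at hm2
        omega
    have h0W : (0 : ZMod n) ∈ Wj j := by
      simp only [hWjdef]
      rw [Finset.mem_filter]
      exact ⟨Finset.mem_univ _, Or.inl (by rw [ZMod.val_zero]; omega)⟩
    have hbv : (((n - j : ℕ) : ZMod n)).val = n - j := ZMod.val_cast_of_lt (by omega)
    have hbW : ((n - j : ℕ) : ZMod n) ∈ Wj j := by
      simp only [hWjdef]
      rw [Finset.mem_filter]
      refine ⟨Finset.mem_univ _, Or.inr ?_⟩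
      rw [hbv]
      omega
    have hne : (0 : ZMod n) ≠ ((n - j : ℕ) : ZMod n) := by
      intro h
      rw [← h, ZMod.val_zero] at hbv
      omega
    have hkey := card_filter_mem2_Mfin (Wj j) (0 : ZMod n) _ h0W hbW hne (d - 2)
    have hd2 : d - 2 + 2 = d := by omega
    rw [hd2] at hkey
    simp only [hAdef]
    rw [hkey, card_Mfin, hWjcard]
    congr 1
    omega
  have hcardSym : (SymF.card : ℚ) = (if 2 ∣ d ∧ 2 ∣ n then
      (Nat.choose (d / 2 - 1 + (k - n / 2)) (d / 2 - 1) : ℚ) else 0) := by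
    by_cases hpar : 2 ∣ d ∧ 2 ∣ n
    · obtain ⟨hd2, hn2⟩ := hpar
      rw [if_pos ⟨hd2, hn2⟩]
      set c : ZMod n := ((n / 2 : ℕ) : ZMod n) with hcdef
      have hcv : c.val = n / 2 := ZMod.val_cast_of_lt (by omega)
      have hc0 : c ≠ 0 := by
        intro h
        rw [h, ZMod.val_zero] at hcv
        omega
      have hcc : c + c = 0 := by
        rw [hcdef, ← Nat.cast_add]
        have h2 : n / 2 + n / 2 = n := by omega
        rw [h2, ZMod.natCast_self]
      have hcval2 : c.val * 2 = n := by omega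
      have hSymeq : SymF = Rfin.filter (fun S => shf c S = S) := by
        ext S
        constructor
        · intro hS
          rw [hSymdef, Finset.mem_filter] at hS
          obtain ⟨hR, c', hc', hfix⟩ := hS
          have hval := sym_shift hkn hupper ((hRfin_iff S).1 hR) hfix hc'
          have hceq : c' = c := by
            apply val_injective
            rw [hcv]; omega
          rw [hceq] at hfix
          rw [Finset.mem_filter]
          exact ⟨hR, hfix⟩
        · intro hS
          rw [Finset.mem_filter] at hS
          rw [hSymdef, Finset.mem_filter]
          exact ⟨hS.1, c, hc0, hS.2⟩
      set W' : Finset (ZMod n) := Finset.univ.filter (fun y => y.val ≤ k - n / 2) with hW'def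
      have hW'card : W'.card = k - n / 2 + 1 := by
        rw [hW'def, card_val_filter (fun m => m ≤ k - n / 2)]
        have hset : (Finset.range n).filter (fun m => m ≤ k - n / 2)
            = Finset.range (k - n / 2 + 1) := by
          ext m
          simp only [Finset.mem_filter, Finset.mem_range]
          omega
        rw [hset, Finset.card_range]
      have hbij : SymF.card = ((Mfin W' (d / 2)).filter (fun L => (0 : ZMod n) ∈ L)).card := by
        rw [hSymeq]
        refine Finset.card_bij' (fun S _ => S.filter (fun y => y.val < n / 2))
          (fun L _ => L + L.map (fun y => c + y)) ?_ ?_ ?_ ?_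
        · intro S hS
          rw [Finset.mem_filter] at hS
          obtain ⟨hR, hfix⟩ := hS
          have hRp := (hRfin_iff S).1 hR
          have hstr := sym_structure hRp hfix hcval2
          simp only [hcv] at hstr
          rw [Finset.mem_filter, mem_Mfin]
          have hcardL : Multiset.card (S.filter (fun y => y.val < n / 2)) = d / 2 := by
            have h1 : Multiset.card S = d := hRp.1
            rw [hstr] at h1
            rw [Multiset.card_add, Multiset.card_map] at h1
            omega
          refine ⟨⟨hcardL, ?_⟩, ?_⟩
          · intro y hy
            rw [Multiset.mem_filter] at hy
            obtain ⟨hyS, hylow⟩ := hy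
            have hcyS : c + y ∈ S := by
              rw [← hfix]
              exact Multiset.mem_map.2 ⟨y, hyS, rfl⟩
            have hval1 : (c + y).val = n / 2 + y.val := by
              rw [ZMod.val_add, hcv, Nat.mod_eq_of_lt (by omega)]
            have hky := hRp.2.2 _ hcyS
            rw [hval1] at hky
            rw [hW'def, Finset.mem_filter]
            exact ⟨Finset.mem_univ _, by omega⟩
          · rw [Multiset.mem_filter]
            exact ⟨hRp.2.1, by rw [ZMod.val_zero]; omega⟩
        · intro L hL
          rw [Finset.mem_filter, mem_Mfin] at hL
          obtain ⟨⟨hcardL, hmemL⟩, h0L⟩ := hL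
          have hvalL : ∀ y ∈ L, y.val ≤ k - n / 2 := by
            intro y hy
            have hyW := hmemL y hy
            rw [hW'def, Finset.mem_filter] at hyW
            exact hyW.2
          have hvadd : ∀ y ∈ L, (c + y).val = n / 2 + y.val := by
            intro y hy
            rw [ZMod.val_add, hcv, Nat.mod_eq_of_lt (by have := hvalL y hy; omega)]
          rw [Finset.mem_filter]
          constructor
          · rw [hRfin_iff]
            refine ⟨?_, ?_, ?_⟩
            · rw [Multiset.card_add, Multiset.card_map, hcardL]; omega
            · exact Multiset.mem_add.2 (Or.inl h0L)
            · intro y hy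
              rcases Multiset.mem_add.1 hy with hy | hy
              · have := hvalL y hy; omega
              · rcases Multiset.mem_map.1 hy with ⟨z, hz, rfl⟩
                rw [hvadd z hz]
                have := hvalL z hz
                omega
          · rw [shf, Multiset.map_add, Multiset.map_map]
            have hmm : L.map ((fun y => c + y) ∘ (fun y => c + y)) = L := by
              have hid : ((fun y => c + y) ∘ (fun y => c + y)) = fun y : ZMod n => y := by
                funext y
                simp only [Function.comp]
                rw [← add_assoc, hcc, zero_add]
              rw [hid, Multiset.map_id']
            rw [hmm]
            exact add_comm _ _
        · intro S hS
          rw [Finset.mem_filter] at hS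
          obtain ⟨hR, hfix⟩ := hS
          have hRp := (hRfin_iff S).1 hR
          have hstr := sym_structure hRp hfix hcval2
          simp only [hcv] at hstr
          exact hstr.symm
        · intro L hL
          rw [Finset.mem_filter, mem_Mfin] at hL
          obtain ⟨⟨hcardL, hmemL⟩, h0L⟩ := hL
          have hvalL : ∀ y ∈ L, y.val ≤ k - n / 2 := by
            intro y hy
            have hyW := hmemL y hy
            rw [hW'def, Finset.mem_filter] at hyW
            exact hyW.2
          rw [Multiset.filter_add]
          have h1 : L.filter (fun y => y.val < n / 2) = L :=
            Multiset.filter_eq_self.2 (fun y hy => by have := hvalL y hy; omega)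
          have h2 : (L.map (fun y => c + y)).filter (fun y => y.val < n / 2) = 0 := by
            apply Multiset.filter_eq_nil.2
            intro y hy
            rcases Multiset.mem_map.1 hy with ⟨z, hz, rfl⟩
            rw [ZMod.val_add, hcv, Nat.mod_eq_of_lt (by have := hvalL z hz; omega)]
            omega
          rw [h1, h2, add_zero]
      have hdd : d / 2 - 1 + 1 = d / 2 := by omega
      have h0W' : (0 : ZMod n) ∈ W' := by
        rw [hW'def, Finset.mem_filter]
        exact ⟨Finset.mem_univ _, by rw [ZMod.val_zero]; omega⟩
      have hfinal : ((Mfin W' (d / 2)).filter (fun L => (0 : ZMod n) ∈ L)).card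
          = Nat.choose (d / 2 - 1 + (k - n / 2)) (d / 2 - 1) := by
        have hkey := card_filter_mem_Mfin W' (0 : ZMod n) h0W' (d / 2 - 1)
        rw [hdd] at hkey
        rw [hkey, card_Mfin, hW'card]
        congr 1
        omega
      rw [hbij, hfinal]
    · rw [if_neg hpar]
      have hempty : SymF = ∅ := by
        rw [Finset.eq_empty_iff_forall_notMem]
        intro S hS
        rw [hSymdef, Finset.mem_filter] at hS
        obtain ⟨hR, c, hc, hfix⟩ := hS
        have hRp := (hRfin_iff S).1 hR
        have hval := sym_shift hkn hupper hRp hfix hc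
        have hn2 : 2 ∣ n := ⟨c.val, by omega⟩
        have hstr := sym_structure hRp hfix hval
        have hdcard : d = 2 * Multiset.card (S.filter (fun y => y.val < c.val)) := by
          have h1 : Multiset.card S = d := hRp.1
          rw [hstr] at h1
          rw [Multiset.card_add, Multiset.card_map] at h1
          omega
        exact hpar ⟨⟨_, hdcard⟩, hn2⟩
      rw [hempty, Finset.card_empty, Nat.cast_zero]
  -- put everything together
  have hJcard : J.card = 2 * k - n + 1 := by
    rw [hJdef, Nat.card_Icc]; omega
  have hsumA : ∑ j ∈ J, (A j).card = (2 * k - n + 1) * Nat.choose (d - 2 + (2 * k - n + 1)) (d - 2) := by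
    rw [Finset.sum_congr rfl hcardA, Finset.sum_const, hJcard, smul_eq_mul]
  rw [hsumA] at hE2
  have q1 : 2 * ((Rfin.card : ℚ)) = 2 * (N : ℚ) + (D.card : ℚ) := by exact_mod_cast hE1
  have q2 : (D.card : ℚ) + (SymF.card : ℚ)
      = ((2 * k - n + 1 : ℕ) : ℚ) * (Nat.choose (d - 2 + (2 * k - n + 1)) (d - 2) : ℚ) := by
    exact_mod_cast hE2
  rw [← hcardSym]
  have q3 : (Rfin.card : ℚ) = (Nat.choose (d - 1 + k) (d - 1) : ℚ) := by exact_mod_cast hcardR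
  linarith [q1, q2, q3]
end
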